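/- Destructive Equality Resolution is covered by the redundancy criterion: let x ≉ t ∨ C be a clause where x is a variable not occurring in t. Then for every ground closure (x ≉ t ∨ C · θ) and every left-reduced ground rewrite system R contained in ≻, either R ⊨ (x ≉ t ∨ C · θ), or (C{x ↦ t} · θ) ≪_R (x ≉ t ∨ C · θ) and R ⊭ (C{x ↦ t} · θ). Consequently every ground closure of x ≉ t ∨ C is redundant w.r.t. the set of ground closures of C{x ↦ t}. -/

import Mathlib

/- Common infrastructure: first-order terms, clauses, ground rewrite systems,
   reduction orderings, the (Horn and non-Horn) R-normalization closure orderings,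
   the Ground Closure (Horn) Superposition Calculus and its redundancy criterion,
   and the candidate interpretation construction, following Waldmann,
   "On the (In-)Completeness of Destructive Equality Resolution in the
   Superposition Calculus". -/

set_option autoImplicit false
set_option maxHeartbeats 1000000

noncomputable section

/-- First-order terms over function symbols `F` and variables `V`. -/
inductive Trm (F V : Type) : Type
  | var : V → Trm F V
  | app : F → List (Trm F V) → Trm F V

namespace Trm
variable {F V : Type}

instance : DecidableEq (Trm F V) := Classical.decEq _

/-- Application of a substitution to a term. -/
def subst (θ : V → Trm F V) : Trm F V → Trm F V
  | var x => θ x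
  | app f ts => app f (ts.attach.map fun t => subst θ t.1)
decreasing_by
  have := List.sizeOf_lt_of_mem t.2
  simp only [Trm.app.sizeOf_spec]
  omega

/-- A term is ground if it contains no variables. -/
inductive IsGround : Trm F V → Prop
  | app {f : F} {ts : List (Trm F V)} : (∀ t ∈ ts, IsGround t) → IsGround (app f ts)

/-- The set of all subterms of a term (including the term itself). -/
def subterms : Trm F V → Finset (Trm F V)
  | var x => {var x}
  | app f ts => insert (app f ts) ((ts.attach.map fun t => subterms t.1).foldr (· ∪ ·) ∅)
decreasing_by
  have := List.sizeOf_lt_of_mem t.2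
  simp only [Trm.app.sizeOf_spec]
  omega

/-- The set of proper subterms of a term (subterms at positions `> ε`). -/
def psubterms : Trm F V → Finset (Trm F V)
  | var _ => ∅
  | app _ ts => (ts.map fun t => subterms t).foldr (· ∪ ·) ∅

end Trm

/-- Contexts: terms with exactly one hole. -/
inductive Ctx (F V : Type) : Type
  | hole : Ctx F V
  | app : F → List (Trm F V) → Ctx F V → List (Trm F V) → Ctx F V

/-- Filling the hole of a context with a term. -/
def Ctx.fill {F V : Type} : Ctx F V → Trm F V → Trm F V
  | .hole, t => t
  | .app f l c r, t => Trm.app f (l ++ c.fill t :: r)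

variable {F V : Type}

/-- `RewAt R s t u root` holds iff `s` rewrites to `t` in one step using a rule of `R`
whose left-hand side is `u`, and `root = true` iff the rewrite position is `ε`. -/
inductive RewAt (R : Set (Trm F V × Trm F V)) : Trm F V → Trm F V → Trm F V → Bool → Prop
  | root {u v : Trm F V} : (u, v) ∈ R → RewAt R u v u true
  | congr {t t' u : Trm F V} {b : Bool} {f : F} {l r : List (Trm F V)} :
      RewAt R t t' u b → RewAt R (.app f (l ++ t :: r)) (.app f (l ++ t' :: r)) u false

/-- One-step rewrite relation `s →_R t`. -/
def Step (R : Set (Trm F V × Trm F V)) (s t : Trm F V) : Prop := ∃ u b, RewAt R s t u b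

/-- `t` is irreducible w.r.t. `R`. -/
def Irred (R : Set (Trm F V × Trm F V)) (t : Trm F V) : Prop := ∀ t', ¬ Step R t t'

/-- `R` is left-reduced: the left-hand side of each rule is irreducible by the other rules. -/
def LeftReduced (R : Set (Trm F V × Trm F V)) : Prop := ∀ p ∈ R, Irred (R \ {p}) p.1

/-- A reduction ordering that is total on ground terms. -/
structure ReductionOrdering (F V : Type) where
  gt : Trm F V → Trm F V → Prop
  trans : ∀ {a b c : Trm F V}, gt a b → gt b c → gt a c
  wf : WellFounded fun a b : Trm F V => gt b a
  compat_ctx : ∀ {s t : Trm F V} (f : F) (l r : List (Trm F V)),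
      gt s t → gt (.app f (l ++ s :: r)) (.app f (l ++ t :: r))
  compat_subst : ∀ {s t : Trm F V} (θ : V → Trm F V), gt s t → gt (s.subst θ) (t.subst θ)
  total_ground : ∀ {s t : Trm F V}, s.IsGround → t.IsGround → s ≠ t → gt s t ∨ gt t s

/-- A left-reduced ground rewrite system contained in the reduction ordering `O`. -/
def GoodRS (O : ReductionOrdering F V) (R : Set (Trm F V × Trm F V)) : Prop :=
  LeftReduced R ∧ ∀ p ∈ R, p.1.IsGround ∧ p.2.IsGround ∧ O.gt p.1 p.2

/-- Reflexive-transitive rewriting to an `R`-normal form. -/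
def ReachNF (R : Set (Trm F V × Trm F V)) (t t' : Trm F V) : Prop :=
  Relation.ReflTransGen (Step R) t t' ∧ Irred R t'

open Classical in
/-- The `R`-normal form `t↓_R` of `t` (via choice; unique for terminating confluent `R`). -/
def nf (R : Set (Trm F V × Trm F V)) (t : Trm F V) : Trm F V :=
  if h : ∃ t', ReachNF R t t' then h.choose else t

/-- The graph of the labeled `R`-redex multiset function `rm_R(t,m)` of Definition 1:
`RM R t m S` holds iff `S` is a possible result of collecting the labeled redexes and
recursing along some `R`-normalization of `t`. -/
inductive RM (R : Set (Trm F V × Trm F V)) : Trm F V → ℕ → Multiset (Trm F V × ℕ) → Prop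
  | irred {t : Trm F V} {m : ℕ} : Irred R t → RM R t m 0
  | step_top {t t' u : Trm F V} {b : Bool} {m : ℕ} {S : Multiset (Trm F V × ℕ)} :
      RewAt R t t' u b → (b = true ∨ 0 < m) → RM R t' m S → RM R t m ((u, m) ::ₘ S)
  | step_deep {t t' u : Trm F V} {S : Multiset (Trm F V × ℕ)} :
      RewAt R t t' u false → RM R t' 0 S → RM R t 0 ((u, 1) ::ₘ S)

open Classical in
/-- The labeled `R`-redex multiset `rm_R(t,m)` (via choice; unique under the
hypotheses of Lemma 1). -/
def rm (R : Set (Trm F V × Trm F V)) (t : Trm F V) (m : ℕ) : Multiset (Trm F V × ℕ) :=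
  if h : ∃ S, RM R t m S then h.choose else 0

/-- Equational literals. -/
inductive Lit (F V : Type) : Type
  | pos : Trm F V → Trm F V → Lit F V
  | neg : Trm F V → Trm F V → Lit F V

instance : DecidableEq (Lit F V) := Classical.decEq _

def Lit.subst (θ : V → Trm F V) : Lit F V → Lit F V
  | .pos s t => .pos (s.subst θ) (t.subst θ)
  | .neg s t => .neg (s.subst θ) (t.subst θ)

def Lit.IsGround : Lit F V → Prop
  | .pos s t => s.IsGround ∧ t.IsGround
  | .neg s t => s.IsGround ∧ t.IsGround

def Lit.posQ : Lit F V → Bool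
  | .pos _ _ => true
  | .neg _ _ => false

/-- A clause is a finite multiset of literals; `⊥` is the empty clause `0`. -/
abbrev Clause (F V : Type) := Multiset (Lit F V)

def Clause.subst (θ : V → Trm F V) (C : Clause F V) : Clause F V := C.map (Lit.subst θ)

def Clause.IsGround (C : Clause F V) : Prop := ∀ L ∈ C, L.IsGround

/-- Horn clause: at most one positive literal. -/
def IsHorn (C : Clause F V) : Prop := Multiset.card (C.filter fun L => L.posQ = true) ≤ 1

/-- The (Dershowitz-Manna) multiset extension of a relation, `M` greater than `N`. -/
def MultGT {α : Type} (r : α → α → Prop) (M N : Multiset α) : Prop :=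
  ∃ X Y Z, M = Z + X ∧ N = Z + Y ∧ X ≠ 0 ∧ ∀ y ∈ Y, ∃ x ∈ X, r x y

/-- The multiset associated to a literal for the literal ordering. -/
def Lit.mset : Lit F V → Multiset (Trm F V)
  | .pos s t => {s, t}
  | .neg s t => {s, s, t, t}

/-- The literal ordering `≻_L`. -/
def litGT (O : ReductionOrdering F V) (L L' : Lit F V) : Prop := MultGT O.gt L.mset L'.mset

/-- The clause ordering `≻_C`. -/
def clauseGT (O : ReductionOrdering F V) (C D : Clause F V) : Prop := MultGT (litGT O) C D

/-- `L` is maximal w.r.t. the rest clause `D`. -/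
def MaxIn (O : ReductionOrdering F V) (L : Lit F V) (D : Clause F V) : Prop :=
  ∀ L' ∈ D, ¬ litGT O L' L

/-- `L` is strictly maximal w.r.t. the rest clause `D`. -/
def SMaxIn (O : ReductionOrdering F V) (L : Lit F V) (D : Clause F V) : Prop :=
  ∀ L' ∈ D, ¬ litGT O L' L ∧ L' ≠ L

section TermSets

def Lit.negSubs : Lit F V → Finset (Trm F V)
  | .neg s t => s.subterms ∪ t.subterms
  | .pos _ _ => ∅

def Lit.posPSubs : Lit F V → Finset (Trm F V)
  | .pos s t => s.psubterms ∪ t.psubterms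
  | .neg _ _ => ∅

def Lit.posSubs : Lit F V → Finset (Trm F V)
  | .pos s t => s.subterms ∪ t.subterms
  | .neg _ _ => ∅

def Lit.negTops : Lit F V → Finset (Trm F V)
  | .neg s t => {s, t}
  | .pos _ _ => ∅

def Lit.posTops : Lit F V → Finset (Trm F V)
  | .pos s t => {s, t}
  | .neg _ _ => ∅

def Lit.allSubs : Lit F V → Finset (Trm F V)
  | .pos s t => s.subterms ∪ t.subterms
  | .neg s t => s.subterms ∪ t.subterms

/-- `ss⁻(C)`: subterms of sides of negative literals. -/
def ssN (C : Clause F V) : Finset (Trm F V) := C.toFinset.sup Lit.negSubs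
/-- `ss⁺_{>ε}(C)`: proper subterms of sides of positive literals. -/
def ssPp (C : Clause F V) : Finset (Trm F V) := C.toFinset.sup Lit.posPSubs
/-- All subterms of sides of positive literals. -/
def ssP (C : Clause F V) : Finset (Trm F V) := C.toFinset.sup Lit.posSubs
/-- `ts⁻(C)`: sides of negative literals. -/
def tsN (C : Clause F V) : Finset (Trm F V) := C.toFinset.sup Lit.negTops
/-- `ts⁺(C)`: sides of positive literals. -/
def tsP (C : Clause F V) : Finset (Trm F V) := C.toFinset.sup Lit.posTops
/-- All subterms occurring in `C`. -/
def allSub (C : Clause F V) : Finset (Trm F V) := C.toFinset.sup Lit.allSubs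

/-- The labeled subterm set `lss(C)` of Definition 1. -/
def lss (C : Clause F V) : Finset (Trm F V × ℕ) :=
  (ssN C).image (fun t => (t, 2)) ∪ ((ssPp C \ ssN C).image fun t => (t, 1)) ∪
    ((tsP C \ (ssPp C ∪ ssN C)).image fun t => (t, 0))

/-- The labeled topterm set `lts(C)` of Definition 1. -/
def lts (C : Clause F V) : Finset (Trm F V × ℕ) :=
  (tsN C).image (fun t => (t, 2)) ∪ ((tsP C \ tsN C).image fun t => (t, 0))

end TermSets

/-- Contribution of one labeled subterm of `C` to `nm_R(C·θ)`. -/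
def nmElt (R : Set (Trm F V × Trm F V)) (θ : V → Trm F V) : Trm F V × ℕ → Multiset (Trm F V × ℕ)
  | (.var x, m) => rm R (θ x) m
  | (.app f ts, m) => rm R (.app f (ts.map fun t => nf R (t.subst θ))) m

/-- The `R`-normalization multiset `nm_R(C·θ)` of Definition 2 (Horn case). -/
def nm (R : Set (Trm F V × Trm F V)) (C : Clause F V) (θ : V → Trm F V) :
    Multiset (Trm F V × ℕ) :=
  (lss C).sum (nmElt R θ) + (lts C).sum fun p => {(nf R (p.1.subst θ), p.2)}

/-- A closure `(C·θ)`. -/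
abbrev Closure (F V : Type) := Clause F V × (V → Trm F V)

/-- The ground instance `Cθ` represented by a closure `(C·θ)`. -/
def Closure.inst (c : Closure F V) : Clause F V := Clause.subst c.2 c.1

def Closure.IsGround (c : Closure F V) : Prop := Clause.IsGround c.inst

/-- Equality of clauses up to bijective variable renaming. -/
def ClauseAlphaEq (C D : Clause F V) : Prop :=
  ∃ ρ : V ≃ V, Clause.subst (fun x => Trm.var (ρ x)) C = D

/-- Identification of closures: equal up to bijective renaming (with the same
ground instance). -/
def CloAlphaEq (c d : Closure F V) : Prop := ClauseAlphaEq c.1 d.1 ∧ c.inst = d.inst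

/-- The tie-breaking closure ordering `≻_Clo`: an arbitrary well-founded ordering on
ground closures, total on closures with the same ground instance, such that
`(C·θ₁) ≻_Clo (D·θ₂)` whenever `Cθ₁ = Dθ₂` and `D` is an instance of `C` but not
vice versa. -/
structure TieBreak (F V : Type) where
  gt : Closure F V → Closure F V → Prop
  wf : WellFounded fun a b : Closure F V => gt b a
  total : ∀ c d : Closure F V, c.inst = d.inst → CloAlphaEq c d ∨ gt c d ∨ gt d c
  inst_gt : ∀ c d : Closure F V, c.inst = d.inst →
      (∃ σ, Clause.subst σ c.1 = d.1) → (¬ ∃ σ, Clause.subst σ d.1 = c.1) → gt c d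

/-- Lexicographic combination of `≻` and `>` on labeled terms. -/
def lexGT (O : ReductionOrdering F V) (p q : Trm F V × ℕ) : Prop :=
  O.gt p.1 q.1 ∨ (p.1 = q.1 ∧ q.2 < p.2)

/-- The `R`-normalization closure ordering `≫_R` of Definition 2 (Horn case). -/
def cloGT (O : ReductionOrdering F V) (T : TieBreak F V) (R : Set (Trm F V × Trm F V))
    (c d : Closure F V) : Prop :=
  MultGT (lexGT O) (nm R c.1 c.2) (nm R d.1 d.2)
  ∨ (nm R c.1 c.2 = nm R d.1 d.2 ∧ clauseGT O c.inst d.inst)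
  ∨ (nm R c.1 c.2 = nm R d.1 d.2 ∧ c.inst = d.inst ∧ T.gt c d)

/-- Convertibility w.r.t. a set of ground equations: the congruence generated by `E`. -/
inductive Conv (E : Set (Trm F V × Trm F V)) : Trm F V → Trm F V → Prop
  | rel {s t : Trm F V} : (s, t) ∈ E → Conv E s t
  | refl (t : Trm F V) : Conv E t t
  | symm {s t : Trm F V} : Conv E s t → Conv E t s
  | trans {s t u : Trm F V} : Conv E s t → Conv E t u → Conv E s u
  | congr {t t' : Trm F V} {f : F} {l r : List (Trm F V)} :
      Conv E t t' → Conv E (.app f (l ++ t :: r)) (.app f (l ++ t' :: r))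

/-- Truth of a literal in the equality Herbrand interpretation generated by `E`. -/
def litTrue (E : Set (Trm F V × Trm F V)) : Lit F V → Prop
  | .pos s t => Conv E s t
  | .neg s t => ¬ Conv E s t

/-- Truth of a (ground) clause in the equality Herbrand interpretation generated by `E`. -/
def ModelsC (E : Set (Trm F V × Trm F V)) (D : Clause F V) : Prop := ∃ L ∈ D, litTrue E L

/-- `R ⊨ (C·θ)`. -/
def Models (E : Set (Trm F V × Trm F V)) (c : Closure F V) : Prop := ModelsC E c.inst

/-- `σ` is an idempotent most general unifier of `s` and `s'`. -/
def IsMGU (σ : V → Trm F V) (s s' : Trm F V) : Prop :=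
  s.subst σ = s'.subst σ ∧
  ∀ τ : V → Trm F V, s.subst τ = s'.subst τ → ∀ x, (σ x).subst τ = τ x

/-- Replacement of all occurrences of `u` by `v` in a term. -/
def replAll (u v : Trm F V) : Trm F V → Trm F V
  | .var x => if Trm.var x = u then v else .var x
  | .app f ts => if Trm.app f ts = u then v else .app f (ts.attach.map fun s => replAll u v s.1)
decreasing_by
  have := List.sizeOf_lt_of_mem s.2
  simp only [Trm.app.sizeOf_spec]
  omega

/-- Replacement of all occurrences of `u` by `v` in a clause. -/
def Clause.replAll (u v : Trm F V) (C : Clause F V) : Clause F V :=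
  C.map fun L => match L with
    | .pos s t => .pos (_root_.replAll u v s) (_root_.replAll u v t)
    | .neg s t => .neg (_root_.replAll u v s) (_root_.replAll u v t)

instance : DecidableEq V := Classical.decEq _

/-- Single-point substitution `{x ↦ t}`. -/
def single (x : V) (t : Trm F V) : V → Trm F V := fun y => if y = x then t else Trm.var y

/-- Ground inferences of the Ground Closure (Horn) Superposition Calculus.
`eqres` is Equality Resolution, `ps1` is Parallel Superposition I (overlap at a
non-variable position `u`), `ps2` is Parallel Superposition II (overlap at or below
a variable `x`, with `xθ = u[tθ]` for a context `u`). -/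
inductive GInf (F V : Type) : Type
  | eqres (C' : Clause F V) (s s' : Trm F V) (σ θ : V → Trm F V)
  | ps1 (D' : Clause F V) (t t' : Trm F V) (C : Clause F V) (u : Trm F V) (σ θ : V → Trm F V)
  | ps2 (D' : Clause F V) (t t' : Trm F V) (C : Clause F V) (x : V) (u : Ctx F V) (θ : V → Trm F V)

namespace GInf

/-- The conclusion of a ground inference. -/
def concl : GInf F V → Closure F V
  | .eqres C' _ _ σ θ => (Clause.subst σ C', θ)
  | .ps1 D' _ t' C u σ θ => (Clause.subst σ (D' + Clause.replAll u t' C), θ)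
  | .ps2 D' _ t' C x u θ => (D' + C, Function.update θ x (u.fill (t'.subst θ)))

/-- The right (or only) premise of a ground inference. -/
def rprem : GInf F V → Closure F V
  | .eqres C' s s' _ θ => (C' + {Lit.neg s s'}, θ)
  | .ps1 _ _ _ C _ _ θ => (C, θ)
  | .ps2 _ _ _ C _ _ θ => (C, θ)

/-- The left premise of a (Superposition) ground inference. -/
def lprem : GInf F V → Closure F V
  | .eqres C' s s' _ θ => (C' + {Lit.neg s s'}, θ)
  | .ps1 D' t t' _ _ _ θ => (D' + {Lit.pos t t'}, θ)
  | .ps2 D' t t' _ _ _ θ => (D' + {Lit.pos t t'}, θ)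

/-- The list of premises of a ground inference. -/
def prems : GInf F V → List (Closure F V)
  | .eqres C' s s' _ θ => [(C' + {Lit.neg s s'}, θ)]
  | .ps1 D' t t' C _ _ θ => [(D' + {Lit.pos t t'}, θ), (C, θ)]
  | .ps2 D' t t' C _ _ θ => [(D' + {Lit.pos t t'}, θ), (C, θ)]

/-- Is the inference a Superposition inference? -/
def IsSup : GInf F V → Prop
  | .eqres _ _ _ _ _ => False
  | .ps1 _ _ _ _ _ _ _ => True
  | .ps2 _ _ _ _ _ _ _ => True

/-- For a Superposition inference with left premise `(D' ∨ t ≈ t' · θ)`: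
the rule `tθ → t'θ` belongs to `R`. -/
def ruleIn (R : Set (Trm F V × Trm F V)) : GInf F V → Prop
  | .eqres _ _ _ _ _ => False
  | .ps1 _ t t' _ _ _ θ => (t.subst θ, t'.subst θ) ∈ R
  | .ps2 _ t t' _ _ _ θ => (t.subst θ, t'.subst θ) ∈ R

/-- Condition (iii) of Definition 5: a Superposition inference with left premise
`(D' ∨ t ≈ t' · θ)` such that `tθ ≻ t'θ` and `(tθ → t'θ) ∉ R`. -/
def ruleNotIn (O : ReductionOrdering F V) (R : Set (Trm F V × Trm F V)) : GInf F V → Prop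
  | .eqres _ _ _ _ _ => False
  | .ps1 _ t t' _ _ _ θ => O.gt (t.subst θ) (t'.subst θ) ∧ (t.subst θ, t'.subst θ) ∉ R
  | .ps2 _ t t' _ _ _ θ => O.gt (t.subst θ) (t'.subst θ) ∧ (t.subst θ, t'.subst θ) ∉ R

end GInf

/-- The common ordering side conditions of the Parallel Superposition rules, for a
left premise `D' ∨ t ≈ t'`, right premise `C`, overlapped term (or variable) `u`,
under the ground substitution `θ`. -/
def SideConds (O : ReductionOrdering F V) (D' : Clause F V) (t t' : Trm F V)
    (C : Clause F V) (u : Trm F V) (θ : V → Trm F V) : Prop :=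
  (u ∈ ssN C ∪ ssPp C →
     clauseGT O (Clause.subst θ C) (Clause.subst θ (D' + {Lit.pos t t'}))) ∧
  (∃ s s',
      (Lit.pos s s' ∈ C ∧ u ∈ s.subterms ∧ O.gt (s.subst θ) (s'.subst θ) ∧
        SMaxIn O (Lit.subst θ (Lit.pos s s')) (Clause.subst θ (C.erase (Lit.pos s s')))) ∨
      (Lit.neg s s' ∈ C ∧ u ∈ s.subterms ∧ O.gt (s.subst θ) (s'.subst θ) ∧
        MaxIn O (Lit.subst θ (Lit.neg s s')) (Clause.subst θ (C.erase (Lit.neg s s'))))) ∧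
  SMaxIn O (Lit.subst θ (Lit.pos t t')) (Clause.subst θ D') ∧
  O.gt (t.subst θ) (t'.subst θ)

/-- Validity of a ground inference: all side conditions of the corresponding rule of
the Ground Closure Horn Superposition Calculus hold. -/
def GInf.IsInf (O : ReductionOrdering F V) : GInf F V → Prop
  | .eqres C' s s' σ θ =>
      Closure.IsGround (C' + {Lit.neg s s'}, θ) ∧
      s.subst θ = s'.subst θ ∧ IsMGU σ s s' ∧
      MaxIn O (Lit.subst θ (Lit.neg s s')) (Clause.subst θ C')
  | .ps1 D' t t' C u σ θ =>
      Closure.IsGround (D' + {Lit.pos t t'}, θ) ∧ Closure.IsGround (C, θ) ∧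
      (¬ ∃ x, u = Trm.var x) ∧ t.subst θ = u.subst θ ∧ IsMGU σ t u ∧
      u ∈ allSub C ∧ SideConds O D' t t' C u θ
  | .ps2 D' t t' C x u θ =>
      Closure.IsGround (D' + {Lit.pos t t'}, θ) ∧ Closure.IsGround (C, θ) ∧
      Trm.var x ∈ allSub C ∧ θ x = u.fill (t.subst θ) ∧
      SideConds O D' t t' C (Trm.var x) θ

/-- Redundant closures (Definition 3). -/
def RedC (O : ReductionOrdering F V) (T : TieBreak F V) (N : Set (Closure F V))
    (c : Closure F V) : Prop :=
  ∀ R, GoodRS O R → Models R c ∨ ∃ d ∈ N, cloGT O T R c d ∧ ¬ Models R d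

/-- Redundant inferences (Definition 4). -/
def RedI (O : ReductionOrdering F V) (T : TieBreak F V) (N : Set (Closure F V))
    (ι : GInf F V) : Prop :=
  ∀ R, GoodRS O R →
    Models R ι.concl
    ∨ (∃ c ∈ N, cloGT O T R ι.rprem c ∧ ¬ Models R c)
    ∨ ι.ruleNotIn O R
    ∨ (ι.IsSup ∧ cloGT O T R ι.lprem ι.rprem)

section Candidate

/-- `s` is a strictly maximal term of the ground clause `D` and occurs in `D` only
(at the top) in positive literals. -/
def StrictMaxTermPos (O : ReductionOrdering F V) (D : Clause F V) (s : Trm F V) : Prop :=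
  (∀ w ∈ allSub D, w = s ∨ O.gt s w) ∧ s ∉ ssN D ∧ s ∉ ssPp D ∧ s ∈ tsP D

/-- The productivity conditions (Horn case) for the closure `(C' ∨ u ≈ u' · θ) ∈ N`
w.r.t. the partial interpretation `Rs`. -/
def ProdConds (O : ReductionOrdering F V) (N : Set (Closure F V))
    (Rs : Set (Trm F V × Trm F V)) (C' : Clause F V) (u u' : Trm F V)
    (θ : V → Trm F V) : Prop :=
  (C' + {Lit.pos u u'}, θ) ∈ N ∧
  Closure.IsGround (C' + {Lit.pos u u'}, θ) ∧
  StrictMaxTermPos O (Clause.subst θ (C' + {Lit.pos u u'})) (u.subst θ) ∧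
  Irred Rs (u.subst θ) ∧
  ¬ Models Rs (C' + {Lit.pos u u'}, θ) ∧
  O.gt (u.subst θ) (u'.subst θ)

/-- `(C' ∨ u ≈ u' · θ)` is the `≫_{Rs}`-smallest closure in `N` satisfying the
productivity conditions for the left-hand side `s`. -/
def ProducesFor (O : ReductionOrdering F V) (T : TieBreak F V) (N : Set (Closure F V))
    (Rs : Set (Trm F V × Trm F V)) (s : Trm F V) (C' : Clause F V) (u u' : Trm F V)
    (θ : V → Trm F V) : Prop :=
  u.subst θ = s ∧ ProdConds O N Rs C' u u' θ ∧
  ∀ D' v v' θ', v.subst θ' = s → ProdConds O N Rs D' v v' θ' →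
    (D' + {Lit.pos v v'}, θ') = (C' + {Lit.pos u u'}, θ) ∨
    cloGT O T Rs (D' + {Lit.pos v v'}, θ') (C' + {Lit.pos u u'}, θ)

/-- `R_s = ⋃_{t ≺ s} E_t`. -/
def Rbelow (O : ReductionOrdering F V) (E : Trm F V → Set (Trm F V × Trm F V))
    (s : Trm F V) : Set (Trm F V × Trm F V) :=
  { p | ∃ t, O.gt s t ∧ p ∈ E t }

/-- `R_* = ⋃_t E_t`. -/
def Rstar (E : Trm F V → Set (Trm F V × Trm F V)) : Set (Trm F V × Trm F V) :=
  { p | ∃ t, p ∈ E t }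

/-- `E` is the family of rule sets of the candidate interpretation constructed from `N`:
`E s = {s → u'θ}` for the `≫_{R_s}`-smallest productive closure for `s` if one
exists, and `E s = ∅` otherwise. -/
def IsCandidate (O : ReductionOrdering F V) (T : TieBreak F V) (N : Set (Closure F V))
    (E : Trm F V → Set (Trm F V × Trm F V)) : Prop :=
  ∀ s : Trm F V,
    (∃ C' u u' θ, ProducesFor O T N (Rbelow O E s) s C' u u' θ ∧
        E s = {(s, u'.subst θ)})
    ∨ ((¬ ∃ C' u u' θ, ProducesFor O T N (Rbelow O E s) s C' u u' θ) ∧ E s = ∅)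

/-- The closure `(C' ∨ u ≈ u' · θ)` produces the rule `uθ → u'θ` in the candidate
interpretation given by `E`. -/
def ProducesRule (O : ReductionOrdering F V) (T : TieBreak F V) (N : Set (Closure F V))
    (E : Trm F V → Set (Trm F V × Trm F V)) (C' : Clause F V) (u u' : Trm F V)
    (θ : V → Trm F V) : Prop :=
  ProducesFor O T N (Rbelow O E (u.subst θ)) (u.subst θ) C' u u' θ ∧
  E (u.subst θ) = {(u.subst θ, u'.subst θ)}

end Candidate

section NonHorn

/-- The graph of the (non-Horn) `R`-redex multiset function `rm_R(t)` of Definition 7. -/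
inductive RMn (R : Set (Trm F V × Trm F V)) :
    Trm F V → Multiset (Multiset (Trm F V)) → Prop
  | irred {t : Trm F V} : Irred R t → RMn R t 0
  | step {t t' u : Trm F V} {b : Bool} {S : Multiset (Multiset (Trm F V))} :
      RewAt R t t' u b → RMn R t' S → RMn R t (({u, u} : Multiset (Trm F V)) ::ₘ S)

open Classical in
/-- The (non-Horn) `R`-redex multiset `rm_R(t)` (via choice). -/
def rmN (R : Set (Trm F V × Trm F V)) (t : Trm F V) : Multiset (Multiset (Trm F V)) :=
  if h : ∃ S, RMn R t S then h.choose else 0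

/-- Contribution of one subterm of a negative literal to the non-Horn `nm_R(C·θ)`. -/
def nmNElt (R : Set (Trm F V × Trm F V)) (θ : V → Trm F V) :
    Trm F V → Multiset (Multiset (Trm F V))
  | .var x => rmN R (θ x)
  | .app f ts => rmN R (.app f (ts.map fun t => nf R (t.subst θ)))

/-- The non-Horn `R`-normalization multiset `nm_R(C·θ)` of Definition 8. -/
def nmN (R : Set (Trm F V × Trm F V)) (C : Clause F V) (θ : V → Trm F V) :
    Multiset (Multiset (Trm F V)) :=
  (ssN C).sum (nmNElt R θ) +
  (tsN C).sum (fun t => {({nf R (t.subst θ), nf R (t.subst θ)} : Multiset (Trm F V))}) +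
  (C.map fun L => match L with
     | .pos s s' => (({({s.subst θ, s'.subst θ} : Multiset (Trm F V))}) :
         Multiset (Multiset (Trm F V)))
     | .neg _ _ => 0).sum

/-- The non-Horn `R`-normalization closure ordering `≫_R` of Definition 8. -/
def cloGTN (O : ReductionOrdering F V) (T : TieBreak F V) (R : Set (Trm F V × Trm F V))
    (c d : Closure F V) : Prop :=
  MultGT (MultGT O.gt) (nmN R c.1 c.2) (nmN R d.1 d.2)
  ∨ (nmN R c.1 c.2 = nmN R d.1 d.2 ∧ clauseGT O c.inst d.inst)
  ∨ (nmN R c.1 c.2 = nmN R d.1 d.2 ∧ c.inst = d.inst ∧ T.gt c d)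

end NonHorn

section Lifting

/-- The set `G(N)` of ground closures of a set `N` of clauses. -/
def GClosures (N : Set (Clause F V)) : Set (Closure F V) :=
  { c | c.1 ∈ N ∧ c.IsGround }

/-- The ordering side conditions of the non-ground Parallel Superposition rule, for
left premise `D' ∨ t ≈ t'`, right premise `C`, overlapped non-variable subterm `u`,
and mgu `σ`. -/
def NGSideConds (O : ReductionOrdering F V) (D' : Clause F V) (t t' : Trm F V)
    (C : Clause F V) (u : Trm F V) (σ : V → Trm F V) : Prop :=
  (u ∈ ssN C ∪ ssPp C →
     ¬ (clauseGT O (Clause.subst σ (D' + {Lit.pos t t'})) (Clause.subst σ C) ∨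
        Clause.subst σ C = Clause.subst σ (D' + {Lit.pos t t'}))) ∧
  (∃ s s',
      (Lit.pos s s' ∈ C ∧ u ∈ s.subterms ∧
        ¬ (O.gt (s'.subst σ) (s.subst σ) ∨ s.subst σ = s'.subst σ) ∧
        SMaxIn O (Lit.subst σ (Lit.pos s s')) (Clause.subst σ (C.erase (Lit.pos s s')))) ∨
      (Lit.neg s s' ∈ C ∧ u ∈ s.subterms ∧
        ¬ (O.gt (s'.subst σ) (s.subst σ) ∨ s.subst σ = s'.subst σ) ∧
        MaxIn O (Lit.subst σ (Lit.neg s s')) (Clause.subst σ (C.erase (Lit.neg s s'))))) ∧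
  SMaxIn O (Lit.subst σ (Lit.pos t t')) (Clause.subst σ D') ∧
  ¬ (O.gt (t'.subst σ) (t.subst σ) ∨ t.subst σ = t'.subst σ)

/-- The ground inference `ι` is a ground instance of an inference of the
(non-ground) Horn Superposition Calculus with Parallel Superposition whose
premises are exactly the clauses occurring in the premise closures of `ι`. -/
def IsGroundInstOfNG (O : ReductionOrdering F V) : GInf F V → Prop
  | .eqres C' s s' σ _ =>
      IsMGU σ s s' ∧
      MaxIn O (Lit.subst σ (Lit.neg s s')) (Clause.subst σ C')
  | .ps1 D' t t' C u σ _ =>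
      (¬ ∃ x, u = Trm.var x) ∧ IsMGU σ t u ∧ u ∈ allSub C ∧
      NGSideConds O D' t t' C u σ
  | .ps2 _ _ _ _ _ _ _ => False

/-- Non-ground inferences of the Horn Superposition Calculus with Parallel
Superposition. -/
inductive NGInf (F V : Type) : Type
  | eqres (C' : Clause F V) (s s' : Trm F V) (σ : V → Trm F V)
  | psup (D' : Clause F V) (t t' : Trm F V) (C : Clause F V) (u : Trm F V) (σ : V → Trm F V)

namespace NGInf

/-- Side conditions of the non-ground rules. -/
def IsInf (O : ReductionOrdering F V) : NGInf F V → Prop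
  | .eqres C' s s' σ =>
      IsMGU σ s s' ∧ MaxIn O (Lit.subst σ (Lit.neg s s')) (Clause.subst σ C')
  | .psup D' t t' C u σ =>
      (¬ ∃ x, u = Trm.var x) ∧ IsMGU σ t u ∧ u ∈ allSub C ∧
      NGSideConds O D' t t' C u σ

/-- Premises of a non-ground inference. -/
def prems : NGInf F V → List (Clause F V)
  | .eqres C' s s' _ => [C' + {Lit.neg s s'}]
  | .psup D' t t' C _ _ => [D' + {Lit.pos t t'}, C]

/-- Conclusion of a non-ground inference. -/
def concl : NGInf F V → Clause F V
  | .eqres C' _ _ σ => Clause.subst σ C'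
  | .psup D' _ t' C u σ => Clause.subst σ (D' + Clause.replAll u t' C)

/-- The set `G(ι)` of ground instances of a non-ground inference. -/
def GInsts (O : ReductionOrdering F V) : NGInf F V → Set (GInf F V)
  | .eqres C' s s' σ => { g | ∃ θ, g = GInf.eqres C' s s' σ θ ∧ g.IsInf O }
  | .psup D' t t' C u σ => { g | ∃ θ, g = GInf.ps1 D' t t' C u σ θ ∧ g.IsInf O }

end NGInf

end Lifting

namespace DERaux
open Trm

variable {F V : Type}

lemma mem_foldr_union {β : Type} [DecidableEq β] {w : β} : ∀ (L : List (Finset β)),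
    w ∈ L.foldr (· ∪ ·) ∅ ↔ ∃ s ∈ L, w ∈ s := by
  intro L
  induction L with
  | nil => simp
  | cons a L ih => simp [ih]

lemma subst_app (θ : V → Trm F V) (f : F) (ts : List (Trm F V)) :
    Trm.subst θ (.app f ts) = .app f (ts.map (Trm.subst θ)) := by
  rw [Trm.subst]
  congr 1
  exact List.attach_map_val

lemma mem_subterms_var {w : Trm F V} {y : V} :
    w ∈ (Trm.var y : Trm F V).subterms ↔ w = .var y := by
  rw [Trm.subterms]; simp

lemma mem_subterms_app {w : Trm F V} {f : F} {ts : List (Trm F V)} :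
    w ∈ (Trm.app f ts).subterms ↔ w = .app f ts ∨ ∃ s ∈ ts, w ∈ s.subterms := by
  rw [Trm.subterms]
  simp [mem_foldr_union, List.mem_map]

lemma self_mem_subterms (s : Trm F V) : s ∈ s.subterms := by
  cases s with
  | var y => simp [mem_subterms_var]
  | app f ts => simp [mem_subterms_app]

lemma subterms_trans : ∀ (s : Trm F V), ∀ w ∈ s.subterms, ∀ v ∈ w.subterms, v ∈ s.subterms
  | .var y => by
      intro w hw v hv
      rw [mem_subterms_var] at hw
      subst hw; exact hv
  | .app f ts => by
      intro w hw v hv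
      rw [mem_subterms_app] at hw ⊢
      rcases hw with rfl | ⟨s, hs, hw⟩
      · rw [mem_subterms_app] at hv; exact hv
      · exact Or.inr ⟨s, hs, subterms_trans s w hw v hv⟩
decreasing_by
  have := List.sizeOf_lt_of_mem hs
  simp only [Trm.app.sizeOf_spec]
  omega

lemma mem_psubterms_var {w : Trm F V} {y : V} :
    w ∈ (Trm.var y : Trm F V).psubterms ↔ False := by
  rw [Trm.psubterms]; simp

lemma mem_psubterms_app {w : Trm F V} {f : F} {ts : List (Trm F V)} :
    w ∈ (Trm.app f ts).psubterms ↔ ∃ s ∈ ts, w ∈ s.subterms := by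
  rw [Trm.psubterms]
  simp [mem_foldr_union, List.mem_map]

lemma psubterms_subset_subterms {w : Trm F V} : ∀ {s : Trm F V}, w ∈ s.psubterms → w ∈ s.subterms := by
  intro s hw
  cases s with
  | var y => rw [mem_psubterms_var] at hw; exact hw.elim
  | app f ts =>
      rw [mem_psubterms_app] at hw
      rw [mem_subterms_app]
      exact Or.inr hw

lemma subst_single_eq_self {x : V} {t : Trm F V} :
    ∀ (s : Trm F V), Trm.var x ∉ s.subterms → s.subst (single x t) = s
  | .var y => by
      intro h
      rw [mem_subterms_var] at h
      have : y ≠ x := fun hyx => h (by rw [hyx])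
      simp [Trm.subst, single, this]
  | .app f ts => by
      intro h
      rw [subst_app]
      congr 1
      conv_rhs => rw [← List.map_id ts]
      apply List.map_congr_left
      intro b hb
      have : Trm.var x ∉ b.subterms := fun hx =>
        h (by rw [mem_subterms_app]; exact Or.inr ⟨b, hb, hx⟩)
      exact subst_single_eq_self b this
decreasing_by
  have := List.sizeOf_lt_of_mem hb
  simp only [Trm.app.sizeOf_spec]
  omega

lemma subst_single_var {x : V} {t : Trm F V} :
    (Trm.var x : Trm F V).subst (single x t) = t := by
  simp [Trm.subst, single]

lemma mem_subterms_subst {x : V} {t : Trm F V} :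
    ∀ (a : Trm F V), ∀ w ∈ (a.subst (single x t)).subterms,
      w ∈ t.subterms ∨ ∃ b ∈ a.subterms, w = b.subst (single x t)
  | .var y => by
      intro w hw
      by_cases hy : y = x
      · subst hy; rw [subst_single_var] at hw; exact Or.inl hw
      · rw [show (Trm.var y : Trm F V).subst (single x t) = .var y by simp [Trm.subst, single, hy]] at hw
        rw [mem_subterms_var] at hw
        exact Or.inr ⟨.var y, self_mem_subterms _, by rw [hw]; simp [Trm.subst, single, hy]⟩
  | .app f ts => by
      intro w hw
      rw [subst_app] at hw
      rw [mem_subterms_app] at hw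
      rcases hw with rfl | ⟨s, hs, hw⟩
      · exact Or.inr ⟨.app f ts, self_mem_subterms _, by rw [subst_app]⟩
      · rcases List.mem_map.mp hs with ⟨b, hb, rfl⟩
        rcases mem_subterms_subst b w hw with h | ⟨c, hc, rfl⟩
        · exact Or.inl h
        · exact Or.inr ⟨c, by rw [mem_subterms_app]; exact Or.inr ⟨b, hb, hc⟩, rfl⟩
decreasing_by
  have := List.sizeOf_lt_of_mem hb
  simp only [Trm.app.sizeOf_spec]
  omega

lemma subst_mem_subterms (σ : V → Trm F V) :
    ∀ (a : Trm F V), ∀ b ∈ a.subterms, b.subst σ ∈ (a.subst σ).subterms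
  | .var y => by
      intro b hb
      rw [mem_subterms_var] at hb
      subst hb; exact self_mem_subterms _
  | .app f ts => by
      intro b hb
      rw [mem_subterms_app] at hb
      rcases hb with rfl | ⟨s, hs, hb⟩
      · exact self_mem_subterms _
      · rw [subst_app, mem_subterms_app]
        exact Or.inr ⟨s.subst σ, List.mem_map_of_mem hs, subst_mem_subterms σ s b hb⟩
decreasing_by
  have := List.sizeOf_lt_of_mem hs
  simp only [Trm.app.sizeOf_spec]
  omega

lemma mem_psubterms_subst {x : V} {t : Trm F V} (a : Trm F V) :
    ∀ w ∈ (a.subst (single x t)).psubterms,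
      w ∈ t.subterms ∨ ∃ b ∈ a.psubterms, w = b.subst (single x t) := by
  intro w hw
  cases a with
  | var y =>
      by_cases hy : y = x
      · subst hy; rw [subst_single_var] at hw
        exact Or.inl (psubterms_subset_subterms hw)
      · rw [show (Trm.var y : Trm F V).subst (single x t) = .var y by simp [Trm.subst, single, hy]] at hw
        rw [mem_psubterms_var] at hw; exact hw.elim
  | app f ts =>
      rw [subst_app, mem_psubterms_app] at hw
      rcases hw with ⟨s, hs, hw⟩
      rcases List.mem_map.mp hs with ⟨b, hb, rfl⟩
      rcases mem_subterms_subst b w hw with h | ⟨c, hc, rfl⟩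
      · exact Or.inl h
      · exact Or.inr ⟨c, by rw [mem_psubterms_app]; exact ⟨b, hb, hc⟩, rfl⟩

lemma psubterms_subst_mem (σ : V → Trm F V) (a : Trm F V) :
    ∀ b ∈ a.psubterms, b.subst σ ∈ (a.subst σ).psubterms := by
  intro b hb
  cases a with
  | var y => rw [mem_psubterms_var] at hb; exact hb.elim
  | app f ts =>
      rw [mem_psubterms_app] at hb
      rcases hb with ⟨s, hs, hb⟩
      rw [subst_app, mem_psubterms_app]
      exact ⟨s.subst σ, List.mem_map_of_mem hs, subst_mem_subterms σ s b hb⟩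

lemma subst_subst (σ θ : V → Trm F V) :
    ∀ a : Trm F V, (a.subst σ).subst θ = a.subst (fun y => (σ y).subst θ)
  | .var y => by simp [Trm.subst]
  | .app f ts => by
      rw [subst_app, subst_app, subst_app, List.map_map]
      congr 1
      apply List.map_congr_left
      intro b hb
      exact subst_subst σ θ b
decreasing_by
  have := List.sizeOf_lt_of_mem hb
  simp only [Trm.app.sizeOf_spec]
  omega

lemma ground_app_inv {f : F} {ts : List (Trm F V)} (h : (Trm.app f ts).IsGround) :
    ∀ b ∈ ts, b.IsGround := by
  cases h with
  | app h => exact h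

lemma ground_subst_single {x : V} {t : Trm F V} {θ : V → Trm F V}
    (ht : (t.subst θ).IsGround) :
    ∀ s : Trm F V, (s.subst θ).IsGround → ((s.subst (single x t)).subst θ).IsGround
  | .var y => by
      intro h
      by_cases hy : y = x
      · subst hy; rw [subst_single_var]; exact ht
      · rw [show (Trm.var y : Trm F V).subst (single x t) = .var y by simp [Trm.subst, single, hy]]
        exact h
  | .app f ts => by
      intro h
      rw [subst_app] at h
      rw [subst_app, subst_app, List.map_map]
      refine Trm.IsGround.app ?_
      intro u hu
      rcases List.mem_map.mp hu with ⟨b, hb, rfl⟩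
      exact ground_subst_single ht b (ground_app_inv h _ (List.mem_map_of_mem hb))
decreasing_by
  have := List.sizeOf_lt_of_mem hb
  simp only [Trm.app.sizeOf_spec]
  omega


section Rewriting

variable {R : Set (Trm F V × Trm F V)} {O : ReductionOrdering F V}

lemma rewAt_gt (hR : GoodRS O R) : ∀ {s v u : Trm F V} {b : Bool},
    RewAt R s v u b → O.gt s v := by
  intro s v u b h
  induction h with
  | root h => exact (hR.2 _ h).2.2
  | congr h ih => exact O.compat_ctx _ _ _ ih

lemma step_gt (hR : GoodRS O R) {s v : Trm F V} (h : Step R s v) : O.gt s v := by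
  obtain ⟨u, b, h⟩ := h
  exact rewAt_gt hR h

lemma step_wf (hR : GoodRS O R) : WellFounded (fun a b : Trm F V => Step R b a) :=
  Subrelation.wf (fun h => step_gt hR h) O.wf

lemma rewAt_size {s v u : Trm F V} {b : Bool} (h : RewAt R s v u b) :
    (b = false → sizeOf u < sizeOf s) ∧ sizeOf u ≤ sizeOf s := by
  induction h with
  | root h => exact ⟨fun h => by simp at h, le_refl _⟩
  | @congr c c' u b f l r h ih =>
      have hc : sizeOf c < sizeOf (Trm.app f (l ++ c :: r)) := by
        have : c ∈ l ++ c :: r := by simp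
        have := List.sizeOf_lt_of_mem this
        simp only [Trm.app.sizeOf_spec]
        omega
      exact ⟨fun _ => lt_of_le_of_lt ih.2 hc, le_of_lt (lt_of_le_of_lt ih.2 hc)⟩

lemma rewAt_single {s v u : Trm F V} {b : Bool} (h : RewAt R s v u b) :
    ∃ w, (u, w) ∈ R ∧ RewAt {(u, w)} s v u b := by
  induction h with
  | root h => exact ⟨_, h, .root rfl⟩
  | congr h ih =>
      obtain ⟨w, hw, h'⟩ := ih
      exact ⟨w, hw, .congr h'⟩

lemma rewAt_mono {R₁ R₂ : Set (Trm F V × Trm F V)} (hsub : R₁ ⊆ R₂)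
    {s v u : Trm F V} {b : Bool} (h : RewAt R₁ s v u b) : RewAt R₂ s v u b := by
  induction h with
  | root h => exact .root (hsub h)
  | congr h ih => exact .congr ih

lemma no_inner (hR : GoodRS O R) {u v : Trm F V} (hr : (u, v) ∈ R) {w u' : Trm F V}
    (h : RewAt R u w u' false) : False := by
  obtain ⟨w', hw', h'⟩ := rewAt_single h
  by_cases heq : (u', w') = (u, v)
  · have h1 := (rewAt_size h).1 rfl
    have : u' = u := congrArg Prod.fst heq
    subst this
    exact lt_irrefl _ h1
  · have hsub : ({(u', w')} : Set (Trm F V × Trm F V)) ⊆ R \ {(u, v)} := by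
      intro p hp
      rcases hp with rfl
      exact ⟨hw', heq⟩
    exact hR.1 (u, v) hr w ⟨u', false, rewAt_mono hsub h'⟩

lemma root_det (hR : GoodRS O R) {u v : Trm F V} (hr : (u, v) ∈ R) {w u' : Trm F V} {b : Bool}
    (h : RewAt R u w u' b) : w = v ∧ u' = u ∧ b = true := by
  cases h with
  | root h' =>
      by_cases hw : w = v
      · exact ⟨hw, rfl, rfl⟩
      · exfalso
        have hm : (u, w) ∈ R \ {(u, v)} := ⟨h', by simp [hw]⟩
        exact hR.1 (u, v) hr w ⟨u, true, .root hm⟩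
  | congr h' => exact absurd (RewAt.congr h') (fun hh => no_inner hR hr hh)

lemma list_split {α : Type} {l₁ r₁ l₂ r₂ : List α} {a b : α} (h : l₁ ++ a :: r₁ = l₂ ++ b :: r₂) :
    (l₁ = l₂ ∧ a = b ∧ r₁ = r₂) ∨ (∃ m, l₂ = l₁ ++ a :: m ∧ r₁ = m ++ b :: r₂) ∨
      (∃ m, l₁ = l₂ ++ b :: m ∧ r₂ = m ++ a :: r₁) := by
  rcases List.append_eq_append_iff.mp h with ⟨a', h₁, h₂⟩ | ⟨c', h₁, h₂⟩
  · cases a' with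
    | nil =>
        simp at h₁ h₂
        exact Or.inl ⟨h₁.symm, h₂.1, h₂.2⟩
    | cons hd tl =>
        rw [List.cons_append] at h₂
        injection h₂ with h₂a h₂b
        exact Or.inr (Or.inl ⟨tl, by rw [h₁, h₂a], h₂b⟩)
  · cases c' with
    | nil =>
        simp at h₁ h₂
        exact Or.inl ⟨h₁, h₂.1.symm, h₂.2.symm⟩
    | cons hd tl =>
        rw [List.cons_append] at h₂
        injection h₂ with h₂a h₂b
        exact Or.inr (Or.inr ⟨tl, by rw [h₁, h₂a], h₂b⟩)

lemma rewAt_inv {s t u : Trm F V} {b : Bool} (h : RewAt R s t u b) :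
    (b = true ∧ s = u ∧ (u, t) ∈ R) ∨
      (∃ f l c c' r b', s = Trm.app f (l ++ c :: r) ∧ t = Trm.app f (l ++ c' :: r) ∧
        RewAt R c c' u b' ∧ b = false) := by
  cases h with
  | root h => exact Or.inl ⟨rfl, rfl, h⟩
  | @congr c c' u b f l r h => exact Or.inr ⟨f, l, c, c', r, b, rfl, rfl, h, rfl⟩

lemma diamond (hR : GoodRS O R) : ∀ {s t₁ u₁ : Trm F V} {b₁ : Bool} {t₂ u₂ : Trm F V} {b₂ : Bool},
    RewAt R s t₁ u₁ b₁ → RewAt R s t₂ u₂ b₂ →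
    (t₁ = t₂ ∧ u₁ = u₂ ∧ b₁ = b₂) ∨ (∃ w, RewAt R t₁ w u₂ false ∧ RewAt R t₂ w u₁ false) := by
  intro s t₁ u₁ b₁ t₂ u₂ b₂ h₁ h₂
  induction h₁ generalizing t₂ u₂ b₂ with
  | @root u v h =>
      obtain ⟨rfl, rfl, rfl⟩ := root_det hR h h₂
      exact Or.inl ⟨rfl, rfl, rfl⟩
  | @congr c c' u₁ bi f l r hc ih =>
      rcases rewAt_inv h₂ with ⟨rfl, rfl, h'⟩ | ⟨f₂, l₂, d, d', r₂, b₂', hs, ht₂, hd, rfl⟩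
      · exact absurd (RewAt.congr hc) (fun hh => no_inner hR h' hh)
      · have hf : f = f₂ ∧ l ++ c :: r = l₂ ++ d :: r₂ := by
          have := hs
          rw [Trm.app.injEq] at this
          exact this
        obtain ⟨rfl, hlist⟩ := hf
        rcases list_split hlist with ⟨rfl, rfl, rfl⟩ | ⟨m, rfl, rfl⟩ | ⟨m, rfl, rfl⟩
        · -- same position
          rcases ih hd with ⟨rfl, rfl, rfl⟩ | ⟨w, hw₁, hw₂⟩
          · exact Or.inl ⟨ht₂.symm, rfl, rfl⟩
          · subst ht₂
            exact Or.inr ⟨Trm.app f (l ++ w :: r), .congr hw₁, .congr hw₂⟩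
        · -- second redex to the right: l₂ = l ++ c :: m, r = m ++ d :: r₂
          subst ht₂
          refine Or.inr ⟨Trm.app f (l ++ c' :: (m ++ d' :: r₂)), ?_, ?_⟩
          · have : Trm.app f (l ++ c' :: (m ++ d :: r₂)) = Trm.app f ((l ++ c' :: m) ++ d :: r₂) := by
              simp
            rw [this]
            have h2 : Trm.app f (l ++ c' :: (m ++ d' :: r₂)) = Trm.app f ((l ++ c' :: m) ++ d' :: r₂) := by
              simp
            rw [h2]
            exact .congr hd
          · have : Trm.app f ((l ++ c :: m) ++ d' :: r₂) = Trm.app f (l ++ c :: (m ++ d' :: r₂)) := by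
              simp
            rw [this]
            exact .congr hc
        · -- second redex to the left: l = l₂ ++ d :: m, r₂ = m ++ c :: r
          subst ht₂
          refine Or.inr ⟨Trm.app f (l₂ ++ d' :: (m ++ c' :: r)), ?_, ?_⟩
          · have : Trm.app f ((l₂ ++ d :: m) ++ c' :: r) = Trm.app f (l₂ ++ d :: (m ++ c' :: r)) := by
              simp
            rw [this]
            exact .congr hd
          · have : Trm.app f (l₂ ++ d' :: (m ++ c :: r)) = Trm.app f ((l₂ ++ d' :: m) ++ c :: r) := by
              simp
            rw [this]
            have h2 : Trm.app f (l₂ ++ d' :: (m ++ c' :: r)) = Trm.app f ((l₂ ++ d' :: m) ++ c' :: r) := by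
              simp
            rw [h2]
            exact .congr hc

lemma RM_destruct {a : Trm F V} {m : ℕ} {S : Multiset (Trm F V × ℕ)} (h : RM R a m S) :
    (Irred R a ∧ S = 0) ∨
      ∃ a' u b ℓ S', RewAt R a a' u b ∧ RM R a' m S' ∧ S = (u, ℓ) ::ₘ S' := by
  cases h with
  | irred h => exact Or.inl ⟨h, rfl⟩
  | step_top h hb h' => exact Or.inr ⟨_, _, _, _, _, h, h', rfl⟩
  | step_deep h h' => exact Or.inr ⟨_, _, _, _, _, h, h', rfl⟩

lemma RM_build {a a' u : Trm F V} {m : ℕ} {S : Multiset (Trm F V × ℕ)}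
    (h : RewAt R a a' u false) (h' : RM R a' m S) : ∃ ℓ, RM R a m ((u, ℓ) ::ₘ S) := by
  cases m with
  | zero => exact ⟨1, .step_deep h h'⟩
  | succ k => exact ⟨k + 1, .step_top h (Or.inr (Nat.succ_pos k)) h'⟩

lemma RM_exists (hR : GoodRS O R) (a : Trm F V) : ∀ m, ∃ S, RM R a m S := by
  induction a using WellFounded.induction (step_wf hR) with
  | _ a ih =>
    intro m
    by_cases hirr : Irred R a
    · exact ⟨0, .irred hirr⟩
    · have : ∃ a', Step R a a' := by
        by_contra hcon
        push_neg at hcon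
        exact hirr hcon
      obtain ⟨a', u, b, hst⟩ := this
      obtain ⟨S, hS⟩ := ih a' ⟨u, b, hst⟩ m
      cases b with
      | true => exact ⟨(u, m) ::ₘ S, .step_top hst (Or.inl rfl) hS⟩
      | false =>
          obtain ⟨ℓ, h⟩ := RM_build hst hS
          exact ⟨_, h⟩

lemma RM_fst_eq (hR : GoodRS O R) (a : Trm F V) : ∀ {m m' : ℕ} {S S' : Multiset (Trm F V × ℕ)},
    RM R a m S → RM R a m' S' → S.map Prod.fst = S'.map Prod.fst := by
  induction a using WellFounded.induction O.wf with
  | _ a ih =>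
    intro m m' S S' h₁ h₂
    rcases RM_destruct h₁ with ⟨hirr, rfl⟩ | ⟨a₁, u₁, b₁, ℓ₁, S₁, hst₁, hRM₁, rfl⟩
    · rcases RM_destruct h₂ with ⟨_, rfl⟩ | ⟨a₂, u₂, b₂, ℓ₂, S₂, hst₂, hRM₂, rfl⟩
      · rfl
      · exact absurd ⟨u₂, b₂, hst₂⟩ (hirr a₂)
    · rcases RM_destruct h₂ with ⟨hirr, rfl⟩ | ⟨a₂, u₂, b₂, ℓ₂, S₂, hst₂, hRM₂, rfl⟩
      · exact absurd ⟨u₁, b₁, hst₁⟩ (hirr a₁)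
      · have hga₁ : O.gt a a₁ := rewAt_gt hR hst₁
        have hga₂ : O.gt a a₂ := rewAt_gt hR hst₂
        rcases diamond hR hst₁ hst₂ with ⟨rfl, rfl, rfl⟩ | ⟨w, hw₁, hw₂⟩
        · have := ih a₁ hga₁ hRM₁ hRM₂
          simp only [Multiset.map_cons, this]
        · have hgw : O.gt a w := O.trans hga₁ (rewAt_gt hR hw₁)
          obtain ⟨S₃, hS₃⟩ := RM_exists hR w m
          obtain ⟨S₃', hS₃'⟩ := RM_exists hR w m'
          obtain ⟨ℓ₃, h₃⟩ := RM_build hw₁ hS₃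
          obtain ⟨ℓ₄, h₄⟩ := RM_build hw₂ hS₃'
          have e₁ : S₁.map Prod.fst = ((u₂, ℓ₃) ::ₘ S₃).map Prod.fst := ih a₁ hga₁ hRM₁ h₃
          have e₂ : S₂.map Prod.fst = ((u₁, ℓ₄) ::ₘ S₃').map Prod.fst := ih a₂ hga₂ hRM₂ h₄
          have e₃ : S₃.map Prod.fst = S₃'.map Prod.fst := ih w hgw hS₃ hS₃'
          simp only [Multiset.map_cons] at e₁ e₂ ⊢
          rw [e₁, e₂, e₃]
          exact Multiset.cons_swap _ _ _

lemma RM_snd_le {a : Trm F V} {m : ℕ} {S : Multiset (Trm F V × ℕ)} (h : RM R a m S) :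
    ∀ p ∈ S, p.2 ≤ max m 1 := by
  induction h with
  | irred h => intro p hp; simp at hp
  | step_top h hb h' ih =>
      intro p hp
      rw [Multiset.mem_cons] at hp
      rcases hp with rfl | hp
      · simp
      · exact ih p hp
  | step_deep h h' ih =>
      intro p hp
      rw [Multiset.mem_cons] at hp
      rcases hp with rfl | hp
      · simp
      · exact ih p hp

lemma RM_snd_eq_aux {a : Trm F V} {m : ℕ} {S : Multiset (Trm F V × ℕ)} (h : RM R a m S) :
    ∀ p ∈ S, 1 ≤ m → p.2 = m := by
  induction h with
  | irred h => intro p hp; simp at hp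
  | step_top h hb h' ih =>
      intro p hp hm
      rw [Multiset.mem_cons] at hp
      rcases hp with rfl | hp
      · rfl
      · exact ih p hp hm
  | step_deep h h' ih => intro p hp hm; omega

lemma RM_snd_eq {a : Trm F V} {m : ℕ} (hm : 1 ≤ m) {S : Multiset (Trm F V × ℕ)}
    (h : RM R a m S) : ∀ p ∈ S, p.2 = m := fun p hp => RM_snd_eq_aux h p hp hm

lemma rm_spec (hR : GoodRS O R) (a : Trm F V) (m : ℕ) : RM R a m (rm R a m) := by
  have hex := RM_exists hR a m
  unfold rm
  rw [dif_pos hex]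
  exact hex.choose_spec

lemma rm_dom (hR : GoodRS O R) (a : Trm F V) {m' : ℕ} (hm' : m' < 2) :
    ∀ p ∈ rm R a m', ∃ q ∈ rm R a 2, lexGT O q p := by
  have h₁ : RM R a m' (rm R a m') := rm_spec hR a m'
  have h₂ : RM R a 2 (rm R a 2) := rm_spec hR a 2
  intro p hp
  have hmem : p.1 ∈ (rm R a 2).map Prod.fst := by
    rw [RM_fst_eq hR a h₂ h₁]
    exact Multiset.mem_map_of_mem _ hp
  obtain ⟨q, hq, hq1⟩ := Multiset.mem_map.mp hmem
  have hq2 : q.2 = 2 := RM_snd_eq (by omega) h₂ q hq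
  have hple : p.2 ≤ max m' 1 := RM_snd_le h₁ p hp
  refine ⟨q, hq, Or.inr ⟨hq1, ?_⟩⟩
  omega

-- normal forms and confluence

lemma step_ctx {f : F} {l r : List (Trm F V)} {c d : Trm F V} (h : Step R c d) :
    Step R (.app f (l ++ c :: r)) (.app f (l ++ d :: r)) := by
  obtain ⟨u, b, h⟩ := h
  exact ⟨u, false, .congr h⟩

lemma rt_ctx {f : F} {l r : List (Trm F V)} {c d : Trm F V}
    (h : Relation.ReflTransGen (Step R) c d) :
    Relation.ReflTransGen (Step R) (.app f (l ++ c :: r)) (.app f (l ++ d :: r)) := by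
  induction h with
  | refl => exact .refl
  | tail _ h ih => exact ih.tail (step_ctx h)

lemma semiconfluent (hR : GoodRS O R) : ∀ s t₁ t₂ : Trm F V, Step R s t₁ → Step R s t₂ →
    ∃ d, Relation.ReflGen (Step R) t₁ d ∧ Relation.ReflTransGen (Step R) t₂ d := by
  intro s t₁ t₂ ⟨u₁, b₁, h₁⟩ ⟨u₂, b₂, h₂⟩
  rcases diamond hR h₁ h₂ with ⟨rfl, _, _⟩ | ⟨w, hw₁, hw₂⟩
  · exact ⟨t₁, .refl, .refl⟩
  · exact ⟨w, .single ⟨u₂, false, hw₁⟩, .single ⟨u₁, false, hw₂⟩⟩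

lemma confluent (hR : GoodRS O R) {s t₁ t₂ : Trm F V}
    (h₁ : Relation.ReflTransGen (Step R) s t₁) (h₂ : Relation.ReflTransGen (Step R) s t₂) :
    ∃ d, Relation.ReflTransGen (Step R) t₁ d ∧ Relation.ReflTransGen (Step R) t₂ d :=
  Relation.church_rosser (semiconfluent hR) h₁ h₂

lemma exists_nf (hR : GoodRS O R) (a : Trm F V) : ∃ b, ReachNF R a b := by
  induction a using WellFounded.induction (step_wf hR) with
  | _ a ih =>
    by_cases hirr : Irred R a
    · exact ⟨a, .refl, hirr⟩
    · have : ∃ a', Step R a a' := by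
        by_contra hcon
        push_neg at hcon
        exact hirr hcon
      obtain ⟨a', hst⟩ := this
      obtain ⟨b, hb₁, hb₂⟩ := ih a' hst
      exact ⟨b, .head hst hb₁, hb₂⟩

lemma nf_spec (hR : GoodRS O R) (a : Trm F V) : ReachNF R a (nf R a) := by
  have hex := exists_nf hR a
  unfold nf
  rw [dif_pos hex]
  exact hex.choose_spec

lemma rt_of_irred {a b : Trm F V} (h : Relation.ReflTransGen (Step R) a b) (hirr : Irred R a) :
    b = a := by
  rcases Relation.ReflTransGen.cases_head h with rfl | ⟨c, hc, _⟩
  · rfl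
  · exact absurd hc (hirr c)

lemma reach_eq_nf (hR : GoodRS O R) {a b : Trm F V}
    (h : Relation.ReflTransGen (Step R) a b) (hb : Irred R b) : b = nf R a := by
  obtain ⟨hr, hirr⟩ := nf_spec hR a
  obtain ⟨d, hd₁, hd₂⟩ := confluent hR h hr
  rw [rt_of_irred hd₁ hb] at hd₂
  exact rt_of_irred hd₂ hirr

lemma rt_nf (hR : GoodRS O R) {a b : Trm F V} (h : Relation.ReflTransGen (Step R) a b) :
    nf R a = nf R b := by
  obtain ⟨hr, hirr⟩ := nf_spec hR b
  exact (reach_eq_nf hR (h.trans hr) hirr).symm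

-- convertibility

lemma rewAt_conv {s v u : Trm F V} {b : Bool} (h : RewAt R s v u b) : Conv R s v := by
  induction h with
  | root h => exact .rel h
  | congr h ih => exact .congr ih

lemma conv_join (hR : GoodRS O R) {s s' : Trm F V} (h : Conv R s s') :
    ∃ d, Relation.ReflTransGen (Step R) s d ∧ Relation.ReflTransGen (Step R) s' d := by
  induction h with
  | rel h => exact ⟨_, .single ⟨_, true, .root h⟩, .refl⟩
  | refl t => exact ⟨t, .refl, .refl⟩
  | symm _ ih => obtain ⟨d, h₁, h₂⟩ := ih; exact ⟨d, h₂, h₁⟩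
  | trans _ _ ih₁ ih₂ =>
      obtain ⟨d₁, h₁, h₂⟩ := ih₁
      obtain ⟨d₂, h₃, h₄⟩ := ih₂
      obtain ⟨e, he₁, he₂⟩ := confluent hR h₂ h₃
      exact ⟨e, h₁.trans he₁, h₄.trans he₂⟩
  | @congr t t' f l r _ ih =>
      obtain ⟨d, h₁, h₂⟩ := ih
      exact ⟨.app f (l ++ d :: r), rt_ctx h₁, rt_ctx h₂⟩

lemma conv_nf (hR : GoodRS O R) {s s' : Trm F V} (h : Conv R s s') : nf R s = nf R s' := by
  obtain ⟨d, h₁, h₂⟩ := conv_join hR h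
  rw [rt_nf hR h₁, rt_nf hR h₂]

lemma conv_app_pre (f : F) : ∀ (pre : List (Trm F V)) {l₁ l₂ : List (Trm F V)},
    List.Forall₂ (Conv R) l₁ l₂ → Conv R (.app f (pre ++ l₁)) (.app f (pre ++ l₂)) := by
  intro pre l₁ l₂ h
  induction h generalizing pre with
  | nil => exact .refl _
  | @cons a₁ a₂ l₁ l₂ hc _ ih =>
      have step1 : Conv R (.app f (pre ++ a₁ :: l₁)) (.app f (pre ++ a₂ :: l₁)) := .congr hc
      have step2 : Conv R (.app f ((pre ++ [a₂]) ++ l₁)) (.app f ((pre ++ [a₂]) ++ l₂)) := ih _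
      rw [← List.append_cons, ← List.append_cons] at step2
      exact step1.trans step2

lemma conv_app {f : F} {l₁ l₂ : List (Trm F V)} (h : List.Forall₂ (Conv R) l₁ l₂) :
    Conv R (.app f l₁) (.app f l₂) := by
  have := conv_app_pre (R := R) f [] h
  simpa using this

lemma forall₂_map {α : Type} {ts : List α} {f₁ f₂ : α → Trm F V}
    (h : ∀ b ∈ ts, Conv R (f₁ b) (f₂ b)) : List.Forall₂ (Conv R) (ts.map f₁) (ts.map f₂) := by
  induction ts with
  | nil => exact .nil
  | cons a ts ih =>
      exact .cons (h a (by simp)) (ih fun b hb => h b (by simp [hb]))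

lemma conv_subst {θ₁ θ₂ : V → Trm F V} (h : ∀ y, Conv R (θ₁ y) (θ₂ y)) :
    ∀ a : Trm F V, Conv R (a.subst θ₁) (a.subst θ₂)
  | .var y => by simpa [Trm.subst] using h y
  | .app f ts => by
      rw [subst_app, subst_app]
      exact conv_app (forall₂_map fun b _ => conv_subst h b)
decreasing_by
  rename_i hb
  have := List.sizeOf_lt_of_mem hb
  simp only [Trm.app.sizeOf_spec]
  omega

end Rewriting


section ClauseSets

variable {x : V} {t : Trm F V} {C : Clause F V}

lemma mem_sup_clause {w : Trm F V} {C : Clause F V} {f : Lit F V → Finset (Trm F V)} :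
    w ∈ C.toFinset.sup f ↔ ∃ L ∈ C, w ∈ f L := by
  rw [Finset.mem_sup]
  simp [Multiset.mem_toFinset]

lemma mem_clause_subst {L' : Lit F V} {σ : V → Trm F V} :
    L' ∈ Clause.subst σ C ↔ ∃ L ∈ C, Lit.subst σ L = L' := by
  unfold Clause.subst
  rw [Multiset.mem_map]

-- sets of the premise P = {x ≉ t} + C

lemma mem_ssN_P {w : Trm F V} :
    w ∈ ssN ({Lit.neg (Trm.var x) t} + C) ↔
      (w = Trm.var x ∨ w ∈ t.subterms) ∨ w ∈ ssN C := by
  unfold ssN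
  rw [mem_sup_clause]
  constructor
  · rintro ⟨L, hL, hw⟩
    rw [Multiset.mem_add, Multiset.mem_singleton] at hL
    rcases hL with rfl | hL
    · simp only [Lit.negSubs, Finset.mem_union, mem_subterms_var] at hw
      exact Or.inl hw
    · exact Or.inr (mem_sup_clause.mpr ⟨L, hL, hw⟩)
  · rintro (hw | hw)
    · refine ⟨Lit.neg (Trm.var x) t, by simp, ?_⟩
      simp only [Lit.negSubs, Finset.mem_union, mem_subterms_var]
      exact hw
    · obtain ⟨L, hL, hw⟩ := mem_sup_clause.mp hw
      exact ⟨L, by simp [hL], hw⟩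

lemma mem_ssPp_P {w : Trm F V} :
    w ∈ ssPp ({Lit.neg (Trm.var x) t} + C) ↔ w ∈ ssPp C := by
  unfold ssPp
  rw [mem_sup_clause, mem_sup_clause]
  constructor
  · rintro ⟨L, hL, hw⟩
    rw [Multiset.mem_add, Multiset.mem_singleton] at hL
    rcases hL with rfl | hL
    · simp [Lit.posPSubs] at hw
    · exact ⟨L, hL, hw⟩
  · rintro ⟨L, hL, hw⟩
    exact ⟨L, by simp [hL], hw⟩

lemma mem_tsN_P {w : Trm F V} :
    w ∈ tsN ({Lit.neg (Trm.var x) t} + C) ↔ (w = Trm.var x ∨ w = t) ∨ w ∈ tsN C := by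
  unfold tsN
  rw [mem_sup_clause]
  constructor
  · rintro ⟨L, hL, hw⟩
    rw [Multiset.mem_add, Multiset.mem_singleton] at hL
    rcases hL with rfl | hL
    · simp only [Lit.negTops, Finset.mem_insert, Finset.mem_singleton] at hw
      exact Or.inl hw
    · exact Or.inr (mem_sup_clause.mpr ⟨L, hL, hw⟩)
  · rintro (hw | hw)
    · refine ⟨Lit.neg (Trm.var x) t, by simp, ?_⟩
      simp only [Lit.negTops, Finset.mem_insert, Finset.mem_singleton]
      exact hw
    · obtain ⟨L, hL, hw⟩ := mem_sup_clause.mp hw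
      exact ⟨L, by simp [hL], hw⟩

lemma mem_tsP_P {w : Trm F V} :
    w ∈ tsP ({Lit.neg (Trm.var x) t} + C) ↔ w ∈ tsP C := by
  unfold tsP
  rw [mem_sup_clause, mem_sup_clause]
  constructor
  · rintro ⟨L, hL, hw⟩
    rw [Multiset.mem_add, Multiset.mem_singleton] at hL
    rcases hL with rfl | hL
    · simp [Lit.posTops] at hw
    · exact ⟨L, hL, hw⟩
  · rintro ⟨L, hL, hw⟩
    exact ⟨L, by simp [hL], hw⟩

-- sets of the conclusion K = C{x ↦ t}

lemma mem_ssN_subst {w : Trm F V} (h : w ∈ ssN (Clause.subst (single x t) C)) :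
    w ∈ t.subterms ∨ ∃ a ∈ ssN C, w = a.subst (single x t) := by
  unfold ssN at h
  rw [mem_sup_clause] at h
  obtain ⟨L', hL', hw⟩ := h
  obtain ⟨L, hL, rfl⟩ := mem_clause_subst.mp hL'
  cases L with
  | pos s s' => simp [Lit.subst, Lit.negSubs] at hw
  | neg s s' =>
      simp only [Lit.subst, Lit.negSubs, Finset.mem_union] at hw
      rcases hw with hw | hw
      all_goals {
        first
        | (rcases mem_subterms_subst s w hw with h | ⟨b, hb, rfl⟩
           · exact Or.inl h
           · exact Or.inr ⟨b, by
               unfold ssN; rw [mem_sup_clause]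
               exact ⟨Lit.neg s s', hL, by simp [Lit.negSubs, hb]⟩, rfl⟩)
        | (rcases mem_subterms_subst s' w hw with h | ⟨b, hb, rfl⟩
           · exact Or.inl h
           · exact Or.inr ⟨b, by
               unfold ssN; rw [mem_sup_clause]
               exact ⟨Lit.neg s s', hL, by simp [Lit.negSubs, hb]⟩, rfl⟩)
      }

lemma mem_ssPp_subst {w : Trm F V} (h : w ∈ ssPp (Clause.subst (single x t) C)) :
    w ∈ t.subterms ∨ ∃ a ∈ ssPp C, w = a.subst (single x t) := by
  unfold ssPp at h
  rw [mem_sup_clause] at h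
  obtain ⟨L', hL', hw⟩ := h
  obtain ⟨L, hL, rfl⟩ := mem_clause_subst.mp hL'
  cases L with
  | neg s s' => simp [Lit.subst, Lit.posPSubs] at hw
  | pos s s' =>
      simp only [Lit.subst, Lit.posPSubs, Finset.mem_union] at hw
      rcases hw with hw | hw
      all_goals {
        first
        | (rcases mem_psubterms_subst s w hw with h | ⟨b, hb, rfl⟩
           · exact Or.inl h
           · exact Or.inr ⟨b, by
               unfold ssPp; rw [mem_sup_clause]
               exact ⟨Lit.pos s s', hL, by simp [Lit.posPSubs, hb]⟩, rfl⟩)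
        | (rcases mem_psubterms_subst s' w hw with h | ⟨b, hb, rfl⟩
           · exact Or.inl h
           · exact Or.inr ⟨b, by
               unfold ssPp; rw [mem_sup_clause]
               exact ⟨Lit.pos s s', hL, by simp [Lit.posPSubs, hb]⟩, rfl⟩)
      }

lemma ssPp_subst_mem {a : Trm F V} (h : a ∈ ssPp C) :
    a.subst (single x t) ∈ ssPp (Clause.subst (single x t) C) := by
  unfold ssPp at h ⊢
  rw [mem_sup_clause] at h ⊢
  obtain ⟨L, hL, ha⟩ := h
  refine ⟨Lit.subst (single x t) L, mem_clause_subst.mpr ⟨L, hL, rfl⟩, ?_⟩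
  cases L with
  | neg s s' => simp [Lit.posPSubs] at ha
  | pos s s' =>
      simp only [Lit.posPSubs, Finset.mem_union] at ha
      show Trm.subst (single x t) a ∈ Lit.posPSubs (Lit.subst (single x t) (Lit.pos s s'))
      simp only [Lit.subst, Lit.posPSubs, Finset.mem_union]
      rcases ha with ha | ha
      · exact Or.inl (psubterms_subst_mem _ s a ha)
      · exact Or.inr (psubterms_subst_mem _ s' a ha)

lemma mem_tsP_subst {w : Trm F V} :
    w ∈ tsP (Clause.subst (single x t) C) ↔ ∃ a ∈ tsP C, w = a.subst (single x t) := by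
  unfold tsP
  rw [mem_sup_clause]
  constructor
  · rintro ⟨L', hL', hw⟩
    obtain ⟨L, hL, rfl⟩ := mem_clause_subst.mp hL'
    cases L with
    | neg s s' => simp [Lit.subst, Lit.posTops] at hw
    | pos s s' =>
        simp only [Lit.subst, Lit.posTops, Finset.mem_insert, Finset.mem_singleton] at hw
        rcases hw with rfl | rfl
        · exact ⟨s, mem_sup_clause.mpr ⟨Lit.pos s s', hL, by simp [Lit.posTops]⟩, rfl⟩
        · exact ⟨s', mem_sup_clause.mpr ⟨Lit.pos s s', hL, by simp [Lit.posTops]⟩, rfl⟩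
  · rintro ⟨a, ha, rfl⟩
    obtain ⟨L, hL, ha⟩ := mem_sup_clause.mp ha
    cases L with
    | neg s s' => simp [Lit.posTops] at ha
    | pos s s' =>
        refine ⟨Lit.subst (single x t) (Lit.pos s s'), mem_clause_subst.mpr ⟨_, hL, rfl⟩, ?_⟩
        simp only [Lit.posTops, Finset.mem_insert, Finset.mem_singleton] at ha
        simp only [Lit.subst, Lit.posTops, Finset.mem_insert, Finset.mem_singleton]
        rcases ha with rfl | rfl
        · exact Or.inl rfl
        · exact Or.inr rfl

lemma mem_tsN_subst {w : Trm F V} :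
    w ∈ tsN (Clause.subst (single x t) C) ↔ ∃ a ∈ tsN C, w = a.subst (single x t) := by
  unfold tsN
  rw [mem_sup_clause]
  constructor
  · rintro ⟨L', hL', hw⟩
    obtain ⟨L, hL, rfl⟩ := mem_clause_subst.mp hL'
    cases L with
    | pos s s' => simp [Lit.subst, Lit.negTops] at hw
    | neg s s' =>
        simp only [Lit.subst, Lit.negTops, Finset.mem_insert, Finset.mem_singleton] at hw
        rcases hw with rfl | rfl
        · exact ⟨s, mem_sup_clause.mpr ⟨Lit.neg s s', hL, by simp [Lit.negTops]⟩, rfl⟩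
        · exact ⟨s', mem_sup_clause.mpr ⟨Lit.neg s s', hL, by simp [Lit.negTops]⟩, rfl⟩
  · rintro ⟨a, ha, rfl⟩
    obtain ⟨L, hL, ha⟩ := mem_sup_clause.mp ha
    cases L with
    | pos s s' => simp [Lit.negTops] at ha
    | neg s s' =>
        refine ⟨Lit.subst (single x t) (Lit.neg s s'), mem_clause_subst.mpr ⟨_, hL, rfl⟩, ?_⟩
        simp only [Lit.negTops, Finset.mem_insert, Finset.mem_singleton] at ha
        simp only [Lit.subst, Lit.negTops, Finset.mem_insert, Finset.mem_singleton]
        rcases ha with rfl | rfl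
        · exact Or.inl rfl
        · exact Or.inr rfl

-- lss / lts membership

lemma mem_lss {C : Clause F V} {p : Trm F V × ℕ} :
    p ∈ lss C ↔ (p.1 ∈ ssN C ∧ p.2 = 2) ∨ (p.1 ∈ ssPp C ∧ p.1 ∉ ssN C ∧ p.2 = 1) ∨
      (p.1 ∈ tsP C ∧ p.1 ∉ ssPp C ∧ p.1 ∉ ssN C ∧ p.2 = 0) := by
  obtain ⟨w, m⟩ := p
  unfold lss
  simp only [Finset.mem_union, Finset.mem_image, Finset.mem_sdiff, Prod.mk.injEq]
  constructor
  · rintro ((⟨a, ha, rfl, rfl⟩ | ⟨a, ⟨ha1, ha2⟩, rfl, rfl⟩) | ⟨a, ⟨ha1, ha2⟩, rfl, rfl⟩)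
    · exact Or.inl ⟨ha, rfl⟩
    · exact Or.inr (Or.inl ⟨ha1, ha2, rfl⟩)
    · push_neg at ha2
      exact Or.inr (Or.inr ⟨ha1, ha2.1, ha2.2, rfl⟩)
  · rintro (⟨h1, rfl⟩ | ⟨h1, h2, rfl⟩ | ⟨h1, h2, h3, rfl⟩)
    · exact Or.inl (Or.inl ⟨w, h1, rfl, rfl⟩)
    · exact Or.inl (Or.inr ⟨w, ⟨h1, h2⟩, rfl, rfl⟩)
    · exact Or.inr ⟨w, ⟨h1, by push_neg; exact ⟨h2, h3⟩⟩, rfl, rfl⟩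

lemma mem_lts {C : Clause F V} {p : Trm F V × ℕ} :
    p ∈ lts C ↔ (p.1 ∈ tsN C ∧ p.2 = 2) ∨ (p.1 ∈ tsP C ∧ p.1 ∉ tsN C ∧ p.2 = 0) := by
  obtain ⟨w, m⟩ := p
  unfold lts
  simp only [Finset.mem_union, Finset.mem_image, Finset.mem_sdiff, Prod.mk.injEq]
  constructor
  · rintro (⟨a, ha, rfl, rfl⟩ | ⟨a, ⟨ha1, ha2⟩, rfl, rfl⟩)
    · exact Or.inl ⟨ha, rfl⟩
    · exact Or.inr ⟨ha1, ha2, rfl⟩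
  · rintro (⟨h1, rfl⟩ | ⟨h1, h2, rfl⟩)
    · exact Or.inl ⟨w, h1, rfl, rfl⟩
    · exact Or.inr ⟨w, ⟨h1, h2⟩, rfl, rfl⟩

lemma lss_label_unique {C : Clause F V} {w : Trm F V} {m₁ m₂ : ℕ}
    (h₁ : (w, m₁) ∈ lss C) (h₂ : (w, m₂) ∈ lss C) : m₁ = m₂ := by
  rw [mem_lss] at h₁ h₂
  simp only at h₁ h₂
  rcases h₁ with ⟨h, rfl⟩ | ⟨h, hn, rfl⟩ | ⟨h, hp, hn, rfl⟩ <;>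
    rcases h₂ with ⟨h', rfl⟩ | ⟨h', hn', rfl⟩ | ⟨h', hp', hn', rfl⟩ <;>
    first | rfl | (exfalso; tauto)

lemma lts_label_unique {C : Clause F V} {w : Trm F V} {m₁ m₂ : ℕ}
    (h₁ : (w, m₁) ∈ lts C) (h₂ : (w, m₂) ∈ lts C) : m₁ = m₂ := by
  rw [mem_lts] at h₁ h₂
  simp only at h₁ h₂
  rcases h₁ with ⟨h, rfl⟩ | ⟨h, hn, rfl⟩ <;>
    rcases h₂ with ⟨h', rfl⟩ | ⟨h', hn', rfl⟩ <;>
    first | rfl | (exfalso; tauto)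

end ClauseSets


section NmElt

variable {R : Set (Trm F V × Trm F V)} {O : ReductionOrdering F V}
variable {x : V} {t : Trm F V} {θ : V → Trm F V}

lemma nmElt_eq_rm (R : Set (Trm F V × Trm F V)) (θ : V → Trm F V) (w : Trm F V) :
    ∃ c, ∀ j, nmElt R θ (w, j) = rm R c j := by
  cases w with
  | var y => exact ⟨θ y, fun j => rfl⟩
  | app f ts => exact ⟨_, fun j => rfl⟩

lemma conv_single_subst (hconv : Conv R (θ x) (t.subst θ)) (a : Trm F V) :
    Conv R ((a.subst (single x t)).subst θ) (a.subst θ) := by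
  rw [subst_subst]
  apply conv_subst
  intro y
  by_cases hy : y = x
  · subst hy
    simp only [single, if_pos rfl]
    exact hconv.symm
  · simp only [single, if_neg hy, Trm.subst]
    exact .refl _

lemma nf_single_subst (hR : GoodRS O R) (hconv : Conv R (θ x) (t.subst θ)) (a : Trm F V) :
    nf R ((a.subst (single x t)).subst θ) = nf R (a.subst θ) :=
  conv_nf hR (conv_single_subst hconv a)

lemma nmElt_subst (hR : GoodRS O R) (hconv : Conv R (θ x) (t.subst θ))
    {a : Trm F V} (ha : a ≠ .var x) (j : ℕ) :
    nmElt R θ (a.subst (single x t), j) = nmElt R θ (a, j) := by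
  cases a with
  | var y =>
      have hy : y ≠ x := fun h => ha (by rw [h])
      rw [show (Trm.var y : Trm F V).subst (single x t) = .var y by simp [Trm.subst, single, hy]]
  | app f ts =>
      rw [subst_app]
      show rm R (.app f (((ts.map (Trm.subst (single x t)))).map fun u => nf R (u.subst θ))) j =
        rm R (.app f (ts.map fun u => nf R (u.subst θ))) j
      rw [List.map_map]
      congr 2
      apply List.map_congr_left
      intro b _
      exact nf_single_subst hR hconv b

lemma litTrue_subst_iff (hconv : Conv R (θ x) (t.subst θ)) (L : Lit F V) :
    litTrue R (Lit.subst θ (Lit.subst (single x t) L)) ↔ litTrue R (Lit.subst θ L) := by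
  cases L with
  | pos s s' =>
      have c₁ := conv_single_subst hconv s
      have c₂ := conv_single_subst hconv s'
      simp only [Lit.subst, litTrue]
      exact ⟨fun h => (c₁.symm.trans h).trans c₂, fun h => (c₁.trans h).trans c₂.symm⟩
  | neg s s' =>
      have c₁ := conv_single_subst hconv s
      have c₂ := conv_single_subst hconv s'
      simp only [Lit.subst, litTrue]
      exact not_congr ⟨fun h => (c₁.symm.trans h).trans c₂, fun h => (c₁.trans h).trans c₂.symm⟩

end NmElt

section SumDom

lemma multGT_of_match {α β : Type} (r : β → β → Prop) (A B : Finset α)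
    (f g : α → Multiset β) (i : α → α)
    (hmem : ∀ p ∈ A, i p ∈ B)
    (hinj : ∀ p ∈ A, ∀ q ∈ A, i p = i q → p = q)
    (hspec : ∀ p ∈ A, f p = g (i p) ∨ ∀ y ∈ f p, ∃ z ∈ g (i p), r z y)
    (hne : ∃ b ∈ B, (∀ p ∈ A, i p ≠ b) ∧ g b ≠ 0) :
    MultGT r (B.sum g) (A.sum f) := by
  classical
  set A₁ := A.filter (fun p => f p = g (i p)) with hA₁
  have hA₁A : A₁ ⊆ A := Finset.filter_subset _ _
  have himsub : A₁.image i ⊆ B := by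
    intro b hb
    obtain ⟨p, hp, rfl⟩ := Finset.mem_image.mp hb
    exact hmem p (hA₁A hp)
  have hinj₁ : Set.InjOn i A₁ := fun p hp q hq h =>
    hinj p (hA₁A (by simpa using hp)) q (hA₁A (by simpa using hq)) h
  refine ⟨(B \ A₁.image i).sum g, (A \ A₁).sum f, A₁.sum f, ?_, ?_, ?_, ?_⟩
  · -- B.sum g = A₁.sum f + (B \ A₁.image i).sum g
    rw [← Finset.sum_sdiff himsub]
    have : (A₁.image i).sum g = A₁.sum f := by
      rw [Finset.sum_image (fun p hp q hq h => hinj₁ hp hq h)]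
      apply Finset.sum_congr rfl
      intro p hp
      exact ((Finset.mem_filter.mp hp).2).symm
    rw [this, add_comm]
  · rw [← Finset.sum_sdiff hA₁A]
    rw [add_comm]
  · -- X ≠ 0
    obtain ⟨b, hbB, hbhit, hbne⟩ := hne
    have hbmem : b ∈ B \ A₁.image i := by
      rw [Finset.mem_sdiff]
      refine ⟨hbB, fun hb => ?_⟩
      obtain ⟨p, hp, hpb⟩ := Finset.mem_image.mp hb
      exact hbhit p (hA₁A hp) hpb
    obtain ⟨y, hy⟩ := Multiset.exists_mem_of_ne_zero hbne
    intro hX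
    have : y ∈ (B \ A₁.image i).sum g := Multiset.mem_sum.mpr ⟨b, hbmem, hy⟩
    rw [hX] at this
    simp at this
  · intro y hy
    obtain ⟨p, hp, hyp⟩ := Multiset.mem_sum.mp hy
    rw [Finset.mem_sdiff] at hp
    obtain ⟨hpA, hpA₁⟩ := hp
    rcases hspec p hpA with heq | hdom
    · exact absurd (Finset.mem_filter.mpr ⟨hpA, heq⟩) hpA₁
    · obtain ⟨z, hz, hrz⟩ := hdom y hyp
      refine ⟨z, ?_, hrz⟩
      apply Multiset.mem_sum.mpr
      refine ⟨i p, ?_, hz⟩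
      rw [Finset.mem_sdiff]
      refine ⟨hmem p hpA, fun hb => ?_⟩
      obtain ⟨q, hq, hqb⟩ := Finset.mem_image.mp hb
      exact hpA₁ (hinj q (hA₁A hq) p hpA hqb ▸ hq)

end SumDom


section Match

variable {R : Set (Trm F V × Trm F V)} {O : ReductionOrdering F V}
variable {x : V} {t : Trm F V} {θ : V → Trm F V} {C : Clause F V}

def matchL (R : Set (Trm F V × Trm F V)) (θ : V → Trm F V) (x : V) (t : Trm F V)
    (C : Clause F V) (q q' : Trm F V × ℕ) : Prop :=
  q' ∈ lss ({Lit.neg (Trm.var x) t} + C) ∧ q'.1.subst (single x t) = q.1 ∧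
    (∀ j, nmElt R θ (q'.1, j) = nmElt R θ (q.1, j)) ∧
    (q'.2 = q.2 ∨ (q'.2 = 2 ∧ q.2 < 2))

def matchT (x : V) (t : Trm F V) (C : Clause F V) (q q' : Trm F V × ℕ) : Prop :=
  q' ∈ lts ({Lit.neg (Trm.var x) t} + C) ∧ q'.1.subst (single x t) = q.1 ∧
    (q'.2 = q.2 ∨ (q'.2 = 2 ∧ q.2 < 2))

lemma exists_matchL (hR : GoodRS O R) (hx : Trm.var x ∉ t.subterms)
    (hconv : Conv R (θ x) (t.subst θ)) :
    ∀ q ∈ lss (Clause.subst (single x t) C), ∃ q', matchL R θ x t C q q' := by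
  rintro ⟨w, m⟩ hq
  rw [mem_lss] at hq
  simp only at hq
  by_cases hwt : w ∈ t.subterms
  · have hwx : Trm.var x ∉ w.subterms := fun h => hx (subterms_trans t w hwt _ h)
    have hlink : w.subst (single x t) = w := subst_single_eq_self w hwx
    have hmem : ((w, 2) : Trm F V × ℕ) ∈ lss ({Lit.neg (Trm.var x) t} + C) := by
      rw [mem_lss]
      exact Or.inl ⟨mem_ssN_P.mpr (Or.inl (Or.inr hwt)), rfl⟩
    refine ⟨(w, 2), hmem, hlink, fun j => rfl, ?_⟩
    rcases hq with ⟨_, rfl⟩ | ⟨_, _, rfl⟩ | ⟨_, _, _, rfl⟩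
    · exact Or.inl rfl
    · exact Or.inr ⟨rfl, by omega⟩
    · exact Or.inr ⟨rfl, by omega⟩
  · rcases hq with ⟨hN, rfl⟩ | ⟨hPp, hNn, rfl⟩ | ⟨hT, hPn, hNn, rfl⟩
    · -- w ∈ ssN K, label 2
      rcases mem_ssN_subst hN with h | ⟨a, haC, rfl⟩
      · exact absurd h hwt
      · have ha : a ≠ .var x := by
          rintro rfl
          rw [subst_single_var] at hwt
          exact hwt (self_mem_subterms t)
        refine ⟨(a, 2), ?_, rfl, fun j => (nmElt_subst hR hconv ha j).symm, Or.inl rfl⟩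
        rw [mem_lss]
        exact Or.inl ⟨mem_ssN_P.mpr (Or.inr haC), rfl⟩
    · -- w ∈ ssPp K, label 1
      rcases mem_ssPp_subst hPp with h | ⟨a, haPp, rfl⟩
      · exact absurd h hwt
      · have ha : a ≠ .var x := by
          rintro rfl
          rw [subst_single_var] at hwt
          exact hwt (self_mem_subterms t)
        by_cases haN : a ∈ ssN ({Lit.neg (Trm.var x) t} + C)
        · refine ⟨(a, 2), ?_, rfl, fun j => (nmElt_subst hR hconv ha j).symm,
            Or.inr ⟨rfl, by omega⟩⟩
          rw [mem_lss]
          exact Or.inl ⟨haN, rfl⟩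
        · refine ⟨(a, 1), ?_, rfl, fun j => (nmElt_subst hR hconv ha j).symm, Or.inl rfl⟩
          rw [mem_lss]
          exact Or.inr (Or.inl ⟨mem_ssPp_P.mpr haPp, haN, rfl⟩)
    · -- w ∈ tsP K, label 0
      rcases mem_tsP_subst.mp hT with ⟨a, haT, rfl⟩
      have ha : a ≠ .var x := by
        rintro rfl
        rw [subst_single_var] at hwt
        exact hwt (self_mem_subterms t)
      by_cases haN : a ∈ ssN ({Lit.neg (Trm.var x) t} + C)
      · refine ⟨(a, 2), ?_, rfl, fun j => (nmElt_subst hR hconv ha j).symm,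
          Or.inr ⟨rfl, by omega⟩⟩
        rw [mem_lss]
        exact Or.inl ⟨haN, rfl⟩
      · by_cases haPp : a ∈ ssPp ({Lit.neg (Trm.var x) t} + C)
        · exact absurd (ssPp_subst_mem (mem_ssPp_P.mp haPp)) hPn
        · refine ⟨(a, 0), ?_, rfl, fun j => (nmElt_subst hR hconv ha j).symm, Or.inl rfl⟩
          rw [mem_lss]
          exact Or.inr (Or.inr ⟨mem_tsP_P.mpr haT, haPp, haN, rfl⟩)

lemma exists_matchT :
    ∀ q ∈ lts (Clause.subst (single x t) C), ∃ q', matchT x t C q q' := by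
  rintro ⟨w, m⟩ hq
  rw [mem_lts] at hq
  simp only at hq
  rcases hq with ⟨hN, rfl⟩ | ⟨hT, hNn, rfl⟩
  · rcases mem_tsN_subst.mp hN with ⟨a, haN, rfl⟩
    refine ⟨(a, 2), ?_, rfl, Or.inl rfl⟩
    rw [mem_lts]
    exact Or.inl ⟨mem_tsN_P.mpr (Or.inr haN), rfl⟩
  · rcases mem_tsP_subst.mp hT with ⟨a, haT, rfl⟩
    by_cases haN : a ∈ tsN ({Lit.neg (Trm.var x) t} + C)
    · refine ⟨(a, 2), ?_, rfl, Or.inr ⟨rfl, by omega⟩⟩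
      rw [mem_lts]
      exact Or.inl ⟨haN, rfl⟩
    · refine ⟨(a, 0), ?_, rfl, Or.inl rfl⟩
      rw [mem_lts]
      exact Or.inr ⟨mem_tsP_P.mpr haT, haN, rfl⟩

open Classical in
def iLfun (R : Set (Trm F V × Trm F V)) (θ : V → Trm F V) (x : V) (t : Trm F V)
    (C : Clause F V) (q : Trm F V × ℕ) : Trm F V × ℕ :=
  if h : ∃ q', matchL R θ x t C q q' then h.choose else q

open Classical in
def iTfun (x : V) (t : Trm F V) (C : Clause F V) (q : Trm F V × ℕ) : Trm F V × ℕ :=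
  if h : ∃ q', matchT x t C q q' then h.choose else q

lemma iLfun_spec (hR : GoodRS O R) (hx : Trm.var x ∉ t.subterms)
    (hconv : Conv R (θ x) (t.subst θ)) {q : Trm F V × ℕ}
    (hq : q ∈ lss (Clause.subst (single x t) C)) : matchL R θ x t C q (iLfun R θ x t C q) := by
  have hex := exists_matchL (C := C) hR hx hconv q hq
  unfold iLfun
  rw [dif_pos hex]
  exact hex.choose_spec

lemma iTfun_spec {q : Trm F V × ℕ}
    (hq : q ∈ lts (Clause.subst (single x t) C)) : matchT x t C q (iTfun x t C q) := by
  have hex := exists_matchT (C := C) q hq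
  unfold iTfun
  rw [dif_pos hex]
  exact hex.choose_spec

lemma main_multGT (hR : GoodRS O R) (hx : Trm.var x ∉ t.subterms)
    (hconv : Conv R (θ x) (t.subst θ)) (C : Clause F V) :
    MultGT (lexGT O) (nm R ({Lit.neg (Trm.var x) t} + C) θ)
      (nm R (Clause.subst (single x t) C) θ) := by
  classical
  have hrepr : ∀ (D : Clause F V),
      nm R D θ = ((lss D).disjSum (lts D)).sum
        (Sum.elim (nmElt R θ) (fun p => ({(nf R (p.1.subst θ), p.2)} : Multiset (Trm F V × ℕ)))) := by
    intro D
    rw [Finset.sum_sumElim]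
    rfl
  rw [hrepr, hrepr]
  apply multGT_of_match (r := lexGT O)
    (i := Sum.map (iLfun R θ x t C) (iTfun x t C))
  · -- hmem
    rintro (q | q) hp
    · have hq := Finset.inl_mem_disjSum.mp hp
      have hm := iLfun_spec hR hx hconv hq
      exact Finset.inl_mem_disjSum.mpr hm.1
    · have hq := Finset.inr_mem_disjSum.mp hp
      have hm := iTfun_spec hq
      exact Finset.inr_mem_disjSum.mpr hm.1
  · -- hinj
    rintro (⟨w, m⟩ | ⟨w, m⟩) hp (⟨w₂, m₂⟩ | ⟨w₂, m₂⟩) hp₂ h <;>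
      simp only [Sum.map_inl, Sum.map_inr] at h
    · have hq := Finset.inl_mem_disjSum.mp hp
      have hq₂ := Finset.inl_mem_disjSum.mp hp₂
      have hm := iLfun_spec hR hx hconv hq
      have hm₂ := iLfun_spec hR hx hconv hq₂
      have hinl := Sum.inl.inj h
      have e1 := hm.2.1
      have e2 := hm₂.2.1
      simp only at e1 e2
      have h1 : w = w₂ := by rw [← e1, ← e2, hinl]
      subst h1
      have h2 : m = m₂ := lss_label_unique hq hq₂
      rw [h2]
    · exact absurd h (by simp)
    · exact absurd h (by simp)
    · have hq := Finset.inr_mem_disjSum.mp hp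
      have hq₂ := Finset.inr_mem_disjSum.mp hp₂
      have hm := iTfun_spec (C := C) hq
      have hm₂ := iTfun_spec (C := C) hq₂
      have hinr := Sum.inr.inj h
      have e1 := hm.2.1
      have e2 := hm₂.2.1
      simp only at e1 e2
      have h1 : w = w₂ := by rw [← e1, ← e2, hinr]
      subst h1
      have h2 : m = m₂ := lts_label_unique hq hq₂
      rw [h2]
  · -- hspec
    rintro (⟨w, m⟩ | ⟨w, m⟩) hp
    · have hq := Finset.inl_mem_disjSum.mp hp
      have hm := iLfun_spec hR hx hconv hq
      rcases hL : iLfun R θ x t C (w, m) with ⟨a, ℓ⟩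
      rw [hL] at hm
      obtain ⟨hmem', hlink, hnmelt, hlab⟩ := hm
      simp only [Sum.map_inl, Sum.elim_inl, hL]
      rcases hlab with heq | ⟨h2, hlt⟩
      · simp only at heq
        left
        rw [heq] at hnmelt ⊢
        exact (hnmelt m).symm
      · simp only at h2 hlt
        subst h2
        right
        intro y hy
        obtain ⟨c, hc⟩ := nmElt_eq_rm R θ w
        have hy' : y ∈ rm R c m := by rw [← hc]; exact hy
        obtain ⟨z, hz, hlex⟩ := rm_dom hR c (by omega : m < 2) y hy'
        refine ⟨z, ?_, hlex⟩
        have : nmElt R θ (a, 2) = rm R c 2 := by rw [hnmelt 2]; exact hc 2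
        rw [this]
        exact hz
    · have hq := Finset.inr_mem_disjSum.mp hp
      have hm := iTfun_spec (C := C) hq
      rcases hL : iTfun x t C (w, m) with ⟨a, ℓ⟩
      rw [hL] at hm
      obtain ⟨hmem', hlink, hlab⟩ := hm
      simp only at hlink
      simp only [Sum.map_inr, Sum.elim_inr, hL]
      have hnf : nf R (a.subst θ) = nf R (w.subst θ) := by
        rw [← hlink]
        exact (nf_single_subst hR hconv _).symm
      rcases hlab with heq | ⟨h2, hlt⟩
      · simp only at heq
        left
        rw [hnf, heq]
      · simp only at h2 hlt
        subst h2
        right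
        intro y hy
        rw [Multiset.mem_singleton] at hy
        refine ⟨(nf R (a.subst θ), 2), by simp, ?_⟩
        subst hy
        exact Or.inr ⟨hnf, by omega⟩
  · -- hne
    have htne : t ≠ Trm.var x := by
      rintro rfl
      exact hx (self_mem_subterms _)
    have hxP : ((Trm.var x : Trm F V), 2) ∈ lts ({Lit.neg (Trm.var x) t} + C) := by
      rw [mem_lts]
      exact Or.inl ⟨mem_tsN_P.mpr (Or.inl (Or.inl rfl)), rfl⟩
    have htP : ((t : Trm F V), 2) ∈ lts ({Lit.neg (Trm.var x) t} + C) := by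
      rw [mem_lts]
      exact Or.inl ⟨mem_tsN_P.mpr (Or.inl (Or.inr rfl)), rfl⟩
    by_cases hhit : ∃ q ∈ lts (Clause.subst (single x t) C),
        iTfun x t C q = ((Trm.var x : Trm F V), 2)
    · refine ⟨Sum.inr (t, 2), Finset.inr_mem_disjSum.mpr htP, ?_, by simp⟩
      rintro (q | q) hp h <;> simp only [Sum.map_inl, Sum.map_inr] at h
      · exact absurd h (by simp)
      · have hiq : iTfun x t C q = (t, 2) := Sum.inr.inj h
        obtain ⟨q₀, hq₀, hq₀e⟩ := hhit
        have hq := Finset.inr_mem_disjSum.mp hp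
        have hm := iTfun_spec (C := C) hq
        have hm₀ := iTfun_spec (C := C) hq₀
        have e1 := hm.2.1
        have e2 := hm₀.2.1
        have h1 : q.1 = t := by
          rw [← e1, hiq]
          exact subst_single_eq_self t hx
        have h2 : q₀.1 = t := by
          rw [← e2, hq₀e]
          exact subst_single_var
        obtain ⟨w, m⟩ := q
        obtain ⟨w₀, m₀⟩ := q₀
        simp only at h1 h2
        subst h1
        subst h2
        have hql : m = m₀ := lts_label_unique hq hq₀
        subst hql
        rw [hq₀e] at hiq
        exact htne (Prod.ext_iff.mp hiq).1.symm
    · refine ⟨Sum.inr (Trm.var x, 2), Finset.inr_mem_disjSum.mpr hxP, ?_, by simp⟩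
      rintro (q | q) hp h <;> simp only [Sum.map_inl, Sum.map_inr] at h
      · exact absurd h (by simp)
      · have hq := Finset.inr_mem_disjSum.mp hp
        exact hhit ⟨q, hq, Sum.inr.inj h⟩

end Match

section Final

variable {R : Set (Trm F V × Trm F V)} {O : ReductionOrdering F V}
variable {x : V} {t : Trm F V} {θ : V → Trm F V} {C : Clause F V}

lemma models_transfer (hconv : Conv R (θ x) (t.subst θ))
    (h : Models R (Clause.subst (single x t) C, θ)) :
    Models R (({Lit.neg (Trm.var x) t} : Clause F V) + C, θ) := by
  obtain ⟨L2, hL2, htrue⟩ := h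
  have hL2' : L2 ∈ Clause.subst θ (Clause.subst (single x t) C) := hL2
  obtain ⟨L', hL', rfl⟩ := mem_clause_subst.mp hL2'
  obtain ⟨L, hL, rfl⟩ := mem_clause_subst.mp hL'
  have htrue' : litTrue R (Lit.subst θ L) := (litTrue_subst_iff hconv L).mp htrue
  refine ⟨Lit.subst θ L, ?_, htrue'⟩
  show Lit.subst θ L ∈ Clause.subst θ ({Lit.neg (Trm.var x) t} + C)
  exact mem_clause_subst.mpr ⟨L, by simp [hL], rfl⟩

lemma lit_ground_subst (ht : (t.subst θ).IsGround) {L : Lit F V}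
    (h : (Lit.subst θ L).IsGround) :
    (Lit.subst θ (Lit.subst (single x t) L)).IsGround := by
  cases L with
  | pos s s' =>
      obtain ⟨h1, h2⟩ := h
      exact ⟨ground_subst_single ht s h1, ground_subst_single ht s' h2⟩
  | neg s s' =>
      obtain ⟨h1, h2⟩ := h
      exact ⟨ground_subst_single ht s h1, ground_subst_single ht s' h2⟩

lemma der_main (O : ReductionOrdering F V) (T : TieBreak F V)
    (hx : Trm.var x ∉ t.subterms) :
    ∀ θ : V → Trm F V, Closure.IsGround ({Lit.neg (Trm.var x) t} + C, θ) →
      ∀ R : Set (Trm F V × Trm F V), GoodRS O R →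
        Models R ({Lit.neg (Trm.var x) t} + C, θ) ∨
        (cloGT O T R ({Lit.neg (Trm.var x) t} + C, θ) (Clause.subst (single x t) C, θ) ∧
          ¬ Models R (Clause.subst (single x t) C, θ)) := by
  intro θ hg R hR
  by_cases hM : Models R ({Lit.neg (Trm.var x) t} + C, θ)
  · exact Or.inl hM
  · right
    have hconv : Conv R (θ x) (t.subst θ) := by
      by_contra hc
      apply hM
      refine ⟨Lit.subst θ (Lit.neg (Trm.var x) t), ?_, ?_⟩
      · show _ ∈ Clause.subst θ ({Lit.neg (Trm.var x) t} + C)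
        exact mem_clause_subst.mpr ⟨Lit.neg (Trm.var x) t, by simp, rfl⟩
      · simp only [Lit.subst, litTrue]
        rw [show (Trm.var x : Trm F V).subst θ = θ x by simp [Trm.subst]]
        exact hc
    refine ⟨Or.inl (main_multGT hR hx hconv C), fun hMc => hM (models_transfer hconv hMc)⟩

lemma der_ground (hx : Trm.var x ∉ t.subterms) (θ : V → Trm F V)
    (hg : Closure.IsGround ({Lit.neg (Trm.var x) t} + C, θ)) :
    Closure.IsGround (Clause.subst (single x t) C, θ) := by
  have ht : (t.subst θ).IsGround := by
    have := hg (Lit.subst θ (Lit.neg (Trm.var x) t))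
      (mem_clause_subst.mpr ⟨Lit.neg (Trm.var x) t, by simp, rfl⟩)
    exact this.2
  intro L2 hL2
  have hL2' : L2 ∈ Clause.subst θ (Clause.subst (single x t) C) := hL2
  obtain ⟨L', hL', rfl⟩ := mem_clause_subst.mp hL2'
  obtain ⟨L, hL, rfl⟩ := mem_clause_subst.mp hL'
  have hLg : (Lit.subst θ L).IsGround :=
    hg (Lit.subst θ L) (mem_clause_subst.mpr ⟨L, by simp [hL], rfl⟩)
  exact lit_ground_subst ht hLg

end Final

end DERaux


/-- Destructive Equality Resolution is covered by the redundancy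
criterion: for every ground closure `(x ≉ t ∨ C · θ)` with `x ∉ vars(t)` and every
left-reduced ground rewrite system `R` contained in `≻`, either `R ⊨ (x ≉ t ∨ C · θ)`,
or `(C{x ↦ t} · θ) ≪_R (x ≉ t ∨ C · θ)` and `R ⊭ (C{x ↦ t} · θ)`; consequently every
ground closure of `x ≉ t ∨ C` is redundant w.r.t. the ground closures of `C{x ↦ t}`. -/
theorem der_redundant {F V : Type} (O : ReductionOrdering F V) (T : TieBreak F V)
    (x : V) (t : Trm F V) (C : Clause F V)
    (hx : Trm.var x ∉ t.subterms) :
    (∀ θ : V → Trm F V, Closure.IsGround ({Lit.neg (Trm.var x) t} + C, θ) →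
      ∀ R : Set (Trm F V × Trm F V), GoodRS O R →
        Models R ({Lit.neg (Trm.var x) t} + C, θ) ∨
        (cloGT O T R ({Lit.neg (Trm.var x) t} + C, θ) (Clause.subst (single x t) C, θ) ∧
          ¬ Models R (Clause.subst (single x t) C, θ))) ∧
    (∀ θ : V → Trm F V, Closure.IsGround ({Lit.neg (Trm.var x) t} + C, θ) →
      RedC O T (GClosures {Clause.subst (single x t) C}) ({Lit.neg (Trm.var x) t} + C, θ)) := by
  have part1 := DERaux.der_main (C := C) O T hx
  refine ⟨part1, ?_⟩
  intro θ hg R hR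
  rcases part1 θ hg R hR with h | ⟨h1, h2⟩
  · exact Or.inl h
  · exact Or.inr ⟨(Clause.subst (single x t) C, θ), ⟨rfl, DERaux.der_ground hx θ hg⟩, h1, h2⟩
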